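/- arXiv:2503.21783 — 5 statements merged into one kernel-verified Lean document; each statement's English description precedes it below -/
import Mathlib

section
/- Let (A,e) be a J(α)-algebra (α ≠ 0,1) satisfying the Martindale-like conditions (i)–(iii). Then every n-multiplicative isomorphism from A onto a commutative algebra A' is additive, and every n-multiplicative derivation of A is additive. -/
/-- Composite of left multiplications: `Lmul [t₁,…,t_r] x = t₁ * (t₂ * (⋯ * (t_r * x)))`. -/
def Lmul {A : Type*} [Mul A] (ts : List A) (x : A) : A := ts.foldr (· * ·) x

/-- A nullifying function on the nonempty finite sequences of `A`, with associated
positive integer `r` for axiom (V). -/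
def IsNullifying {A : Type*} [NonUnitalNonAssocCommRing A] (f : List A → A) (r : ℕ) : Prop :=
  0 < r ∧
  -- (I) permutation invariance
  (∀ l l' : List A, l.Perm l' → f l = f l') ∧
  -- (II)
  (∀ s t : List A, s ≠ [] → t ≠ [] → (f (s ++ [t.sum]) = f (s ++ t) ↔ f t = 0)) ∧
  -- (III)
  (∀ x : A, f [x] = 0) ∧
  -- (IV)
  (∀ s : List A, s ≠ [] → f (s ++ [(0 : A)]) = f s) ∧
  -- (V)
  (∀ ts : List A, ts.length = r → ∀ l : List A, Lmul ts (f l) = f (l.map (Lmul ts)))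
/-- The `lam`-eigenspace (as a set) of left multiplication by `e`. -/
def eigSet {F A : Type*} [Field F] [NonUnitalNonAssocCommRing A] [Module F A]
    (e : A) (lam : F) : Set A := {x | e * x = lam • x}

/-- `(A, e)` is a `J(α)`-algebra: `e` is idempotent, `α ≠ 0, 1`, `A` decomposes as the sum
of the `1`-, `0`- and `α`-eigenspaces of `L_e`, and the Jordan-type fusion law holds. -/
structure IsJAlg {F A : Type*} [Field F] [NonUnitalNonAssocCommRing A] [Module F A]
    (e : A) (α : F) : Prop where
  idem : e * e = e
  hα0 : α ≠ 0
  hα1 : α ≠ 1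
  decomp : ∀ x : A, ∃ x1 ∈ eigSet e (1 : F), ∃ x0 ∈ eigSet e (0 : F), ∃ xa ∈ eigSet e α,
    x = x1 + x0 + xa
  f11 : ∀ x ∈ eigSet e (1 : F), ∀ y ∈ eigSet e (1 : F), x * y ∈ eigSet e (1 : F)
  f10 : ∀ x ∈ eigSet e (1 : F), ∀ y ∈ eigSet e (0 : F), x * y = 0
  f1a : ∀ x ∈ eigSet e (1 : F), ∀ y ∈ eigSet e α, x * y ∈ eigSet e α
  f00 : ∀ x ∈ eigSet e (0 : F), ∀ y ∈ eigSet e (0 : F), x * y ∈ eigSet e (0 : F)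
  f0a : ∀ x ∈ eigSet e (0 : F), ∀ y ∈ eigSet e α, x * y ∈ eigSet e α
  faa : ∀ x ∈ eigSet e α, ∀ y ∈ eigSet e α, ∃ z1 ∈ eigSet e (1 : F), ∃ z0 ∈ eigSet e (0 : F),
    x * y = z1 + z0

/-- Martindale-like conditions (i)–(iii) for a `J(α)`-algebra. -/
def MartindaleJ {F A : Type*} [Field F] [NonUnitalNonAssocCommRing A] [Module F A]
    (e : A) (α : F) : Prop :=
  (∀ a ∈ eigSet e (1 : F), (∀ t ∈ eigSet e α, t * a = 0) → a = 0) ∧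
  (∀ a ∈ eigSet e (0 : F), (∀ t ∈ eigSet e α, t * a = 0) → a = 0) ∧
  (∀ a ∈ eigSet e (0 : F), (∀ t ∈ eigSet e (0 : F), t * a = 0) → a = 0) ∧
  (∀ a ∈ eigSet e α, (∀ t ∈ eigSet e (0 : F), t * a = 0) → a = 0)
namespace JAddProof
set_option linter.unusedSectionVars false

section LmulBasic
variable {R : Type*} [NonUnitalNonAssocCommRing R]

theorem Lmul_nil (x : R) : Lmul ([] : List R) x = x := rfl

theorem Lmul_cons (t : R) (l : List R) (x : R) : Lmul (t :: l) x = t * Lmul l x := rfl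

theorem Lmul_append (l₁ l₂ : List R) (x : R) :
    Lmul (l₁ ++ l₂) x = Lmul l₁ (Lmul l₂ x) := by
  simp [Lmul, List.foldr_append]

theorem Lmul_single (t x : R) : Lmul [t] x = t * x := rfl

theorem Lmul_add (l : List R) (x y : R) : Lmul l (x + y) = Lmul l x + Lmul l y := by
  induction l with
  | nil => rfl
  | cons t l ih => simp [Lmul_cons, ih, mul_add]

theorem Lmul_zero (l : List R) : Lmul l (0 : R) = 0 := by
  induction l with
  | nil => rfl
  | cons t l ih => simp [Lmul_cons, ih]

theorem Lmul_sub (l : List R) (x y : R) : Lmul l (x - y) = Lmul l x - Lmul l y := by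
  induction l with
  | nil => rfl
  | cons t l ih => simp [Lmul_cons, ih, mul_sub]

theorem Lmul_sum (l : List R) (xs : List R) :
    Lmul l xs.sum = (xs.map (Lmul l)).sum := by
  induction xs with
  | nil => simp [Lmul_zero]
  | cons a as ih => simp [Lmul_add, ih]

end LmulBasic

section LmulSmul
variable {F A : Type*} [Field F] [NonUnitalNonAssocCommRing A] [Module F A]
  [SMulCommClass F A A] [IsScalarTower F A A]

theorem Lmul_smul (l : List A) (c : F) (x : A) : Lmul l (c • x) = c • Lmul l x := by
  induction l with
  | nil => rfl
  | cons t l ih => simp [Lmul_cons, ih, mul_smul_comm]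

end LmulSmul

section Eig
variable {F A : Type*} [Field F] [NonUnitalNonAssocCommRing A] [Module F A]
  [SMulCommClass F A A] [IsScalarTower F A A]

theorem mem_eig {e : A} {lam : F} {x : A} : x ∈ eigSet e lam ↔ e * x = lam • x := Iff.rfl

theorem eig_zero (e : A) (lam : F) : (0 : A) ∈ eigSet e lam := by
  simp [eigSet]

theorem eig_add {e : A} {lam : F} {x y : A} (hx : x ∈ eigSet e lam) (hy : y ∈ eigSet e lam) :
    x + y ∈ eigSet e lam := by
  simp only [eigSet, Set.mem_setOf_eq] at *
  rw [mul_add, hx, hy, smul_add]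

theorem eig_smul {e : A} {lam : F} (c : F) {x : A} (hx : x ∈ eigSet e lam) :
    c • x ∈ eigSet e lam := by
  simp only [eigSet, Set.mem_setOf_eq] at *
  rw [mul_smul_comm, hx, smul_comm]

theorem eig_sub {e : A} {lam : F} {x y : A} (hx : x ∈ eigSet e lam) (hy : y ∈ eigSet e lam) :
    x - y ∈ eigSet e lam := by
  simp only [eigSet, Set.mem_setOf_eq] at *
  rw [mul_sub, hx, hy, smul_sub]

theorem smul_cancel {c : F} (hc : c ≠ 0) {v : A} (hv : c • v = 0) : v = 0 := by
  have h2 := congrArg (fun w => c⁻¹ • w) hv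
  simpa [inv_smul_smul₀ hc] using h2

end Eig
end JAddProof
namespace JAddProof
section Proj
variable {F A : Type*} [Field F] [NonUnitalNonAssocCommRing A] [Module F A]
  [SMulCommClass F A A] [IsScalarTower F A A]
variable {e : A} {α : F}

theorem e_mem (h : IsJAlg e α) : e ∈ eigSet e (1 : F) := by
  simp only [eigSet, Set.mem_setOf_eq, h.idem, one_smul]

theorem sum_eq_zero (h : IsJAlg e α) {u1 u0 ua : A}
    (h1 : u1 ∈ eigSet e (1 : F)) (h0 : u0 ∈ eigSet e (0 : F)) (ha : ua ∈ eigSet e α)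
    (hs : u1 + u0 + ua = 0) : u1 = 0 ∧ u0 = 0 ∧ ua = 0 := by
  have h1' : e * u1 = u1 := by rw [mem_eig.mp h1, one_smul]
  have h0' : e * u0 = 0 := by rw [mem_eig.mp h0, zero_smul]
  have ha' : e * ua = α • ua := mem_eig.mp ha
  have e1 : u1 + α • ua = 0 := by
    have := congrArg (fun w => e * w) hs
    simpa [mul_add, h1', h0', ha'] using this
  have e2 : u1 + (α * α) • ua = 0 := by
    have := congrArg (fun w => e * w) e1
    simpa [mul_add, h1', mul_smul_comm, ha', smul_smul] using this
  have e3 : (α * α - α) • ua = 0 := by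
    have : (u1 + (α * α) • ua) - (u1 + α • ua) = 0 := by rw [e1, e2, sub_zero]
    calc (α * α - α) • ua = (u1 + (α * α) • ua) - (u1 + α • ua) := by
          rw [sub_smul]; abel
      _ = 0 := this
  have hαα : α * α - α ≠ 0 := by
    intro hc
    rcases mul_eq_zero.mp (show α * (α - 1) = 0 by rw [mul_sub, mul_one]; exact hc) with h' | h'
    · exact h.hα0 h'
    · exact h.hα1 (sub_eq_zero.mp h')
  have hua : ua = 0 := smul_cancel hαα e3
  have hu1 : u1 = 0 := by
    have := e1; rw [hua, smul_zero, add_zero] at this; exact this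
  refine ⟨hu1, ?_, hua⟩
  have := hs; rw [hu1, hua, zero_add, add_zero] at this; exact this

noncomputable def p1 (h : IsJAlg e α) (x : A) : A := (h.decomp x).choose
noncomputable def p0 (h : IsJAlg e α) (x : A) : A := (h.decomp x).choose_spec.2.choose
noncomputable def pa (h : IsJAlg e α) (x : A) : A :=
  (h.decomp x).choose_spec.2.choose_spec.2.choose

theorem p_spec (h : IsJAlg e α) (x : A) :
    p1 h x ∈ eigSet e (1 : F) ∧ p0 h x ∈ eigSet e (0 : F) ∧ pa h x ∈ eigSet e α ∧
      x = p1 h x + p0 h x + pa h x := by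
  have s1 := (h.decomp x).choose_spec
  have s2 := s1.2.choose_spec
  have s3 := s2.2.choose_spec
  exact ⟨s1.1, s2.1, s3.1, s3.2⟩

theorem comp_unique (h : IsJAlg e α) {x u1 u0 ua : A}
    (h1 : u1 ∈ eigSet e (1 : F)) (h0 : u0 ∈ eigSet e (0 : F)) (ha : ua ∈ eigSet e α)
    (hx : x = u1 + u0 + ua) :
    p1 h x = u1 ∧ p0 h x = u0 ∧ pa h x = ua := by
  obtain ⟨q1, q0, qa, hq⟩ := p_spec h x
  have key : p1 h x + p0 h x + pa h x = u1 + u0 + ua := by rw [← hq, ← hx]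
  have hz : (p1 h x - u1) + (p0 h x - u0) + (pa h x - ua) = 0 := by
    rw [show (p1 h x - u1) + (p0 h x - u0) + (pa h x - ua)
        = (p1 h x + p0 h x + pa h x) - (u1 + u0 + ua) by abel, key, sub_self]
  obtain ⟨z1, z0, za⟩ := sum_eq_zero h (eig_sub q1 h1) (eig_sub q0 h0) (eig_sub qa ha) hz
  exact ⟨sub_eq_zero.mp z1, sub_eq_zero.mp z0, sub_eq_zero.mp za⟩

theorem proj_of_mem1 (h : IsJAlg e α) {v : A} (hv : v ∈ eigSet e (1 : F)) :
    p1 h v = v ∧ p0 h v = 0 ∧ pa h v = 0 :=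
  comp_unique h hv (eig_zero e 0) (eig_zero e α) (by simp)

theorem proj_of_mem0 (h : IsJAlg e α) {v : A} (hv : v ∈ eigSet e (0 : F)) :
    p1 h v = 0 ∧ p0 h v = v ∧ pa h v = 0 :=
  comp_unique h (eig_zero e 1) hv (eig_zero e α) (by simp)

theorem proj_of_memα (h : IsJAlg e α) {v : A} (hv : v ∈ eigSet e α) :
    p1 h v = 0 ∧ p0 h v = 0 ∧ pa h v = v :=
  comp_unique h (eig_zero e 1) (eig_zero e 0) hv (by simp)

theorem mem1_of_proj (h : IsJAlg e α) {v : A} (h0 : p0 h v = 0) (ha : pa h v = 0) :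
    v ∈ eigSet e (1 : F) := by
  obtain ⟨q1, q0, qa, hq⟩ := p_spec h v
  have : v = p1 h v := by
    calc v = p1 h v + p0 h v + pa h v := hq
      _ = p1 h v := by rw [h0, ha, add_zero, add_zero]
  rw [this]; exact q1

theorem mem0_of_proj (h : IsJAlg e α) {v : A} (h1 : p1 h v = 0) (ha : pa h v = 0) :
    v ∈ eigSet e (0 : F) := by
  obtain ⟨q1, q0, qa, hq⟩ := p_spec h v
  have : v = p0 h v := by
    calc v = p1 h v + p0 h v + pa h v := hq
      _ = p0 h v := by rw [h1, ha, zero_add, add_zero]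
  rw [this]; exact q0

theorem eq_zero_of_memα_pa (h : IsJAlg e α) {v : A} (hv : v ∈ eigSet e α)
    (hpa : pa h v = 0) : v = 0 := by
  have := (proj_of_memα h hv).2.2
  rw [hpa] at this; exact this.symm

end Proj
end JAddProof
namespace JAddProof
section Mul
variable {F A : Type*} [Field F] [NonUnitalNonAssocCommRing A] [Module F A]
  [SMulCommClass F A A] [IsScalarTower F A A]
variable {e : A} {α : F}

theorem mul10 (h : IsJAlg e α) {x y : A} (hx : x ∈ eigSet e (1 : F))
    (hy : y ∈ eigSet e (0 : F)) : x * y = 0 := h.f10 x hx y hy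

theorem mul01 (h : IsJAlg e α) {x y : A} (hx : x ∈ eigSet e (0 : F))
    (hy : y ∈ eigSet e (1 : F)) : x * y = 0 := by
  rw [mul_comm]; exact h.f10 y hy x hx

theorem mulα1 (h : IsJAlg e α) {t a : A} (ht : t ∈ eigSet e α)
    (ha : a ∈ eigSet e (1 : F)) : t * a ∈ eigSet e α := by
  rw [mul_comm]; exact h.f1a a ha t ht

theorem mulα0 (h : IsJAlg e α) {t b : A} (ht : t ∈ eigSet e α)
    (hb : b ∈ eigSet e (0 : F)) : t * b ∈ eigSet e α := by
  rw [mul_comm]; exact h.f0a b hb t ht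

theorem mul0α (h : IsJAlg e α) {s p : A} (hs : s ∈ eigSet e (0 : F))
    (hp : p ∈ eigSet e α) : s * p ∈ eigSet e α := h.f0a s hs p hp

theorem mul00 (h : IsJAlg e α) {s b : A} (hs : s ∈ eigSet e (0 : F))
    (hb : b ∈ eigSet e (0 : F)) : s * b ∈ eigSet e (0 : F) := h.f00 s hs b hb

end Mul

/-- Being in the even part `A₁ ⊕ A₀`. -/
def InB (F : Type*) {A : Type*} [Field F] [NonUnitalNonAssocCommRing A] [Module F A]
    (e : A) (x : A) : Prop :=
  ∃ w1 ∈ eigSet e (1 : F), ∃ w0 ∈ eigSet e (0 : F), x = w1 + w0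

section Mul2
variable {F A : Type*} [Field F] [NonUnitalNonAssocCommRing A] [Module F A]
  [SMulCommClass F A A] [IsScalarTower F A A]
variable {e : A} {α : F}

theorem InB_of1 {x : A} (hx : x ∈ eigSet e (1 : F)) : InB F e x :=
  ⟨x, hx, 0, eig_zero e 0, by simp⟩

theorem InB_of0 {x : A} (hx : x ∈ eigSet e (0 : F)) : InB F e x :=
  ⟨0, eig_zero e 1, x, hx, by simp⟩

theorem InB_add {x y : A} (hx : InB F e x) (hy : InB F e y) :
    InB F e (x + y) := by
  obtain ⟨x1, hx1, x0, hx0, rfl⟩ := hx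
  obtain ⟨y1, hy1, y0, hy0, rfl⟩ := hy
  exact ⟨x1 + y1, eig_add hx1 hy1, x0 + y0, eig_add hx0 hy0, by abel⟩

theorem InB_smul (c : F) {x : A} (hx : InB F e x) : InB F e (c • x) := by
  obtain ⟨x1, hx1, x0, hx0, rfl⟩ := hx
  exact ⟨c • x1, eig_smul c hx1, c • x0, eig_smul c hx0, by rw [smul_add]⟩

theorem mulαB (h : IsJAlg e α) {t w : A} (ht : t ∈ eigSet e α) (hw : InB F e w) :
    t * w ∈ eigSet e α := by
  obtain ⟨w1, hw1, w0, hw0, rfl⟩ := hw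
  rw [mul_add]
  exact eig_add (mulα1 h ht hw1) (mulα0 h ht hw0)

theorem mul0B (h : IsJAlg e α) {s w : A} (hs : s ∈ eigSet e (0 : F))
    (hw : InB F e w) : s * w ∈ eigSet e (0 : F) := by
  obtain ⟨w1, hw1, w0, hw0, rfl⟩ := hw
  rw [mul_add, mul01 h hs hw1, zero_add]
  exact mul00 h hs hw0

theorem mulαα_inB (h : IsJAlg e α) {x y : A} (hx : x ∈ eigSet e α) (hy : y ∈ eigSet e α) :
    InB F e (x * y) := by
  obtain ⟨z1, hz1, z0, hz0, hz⟩ := h.faa x hx y hy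
  exact ⟨z1, hz1, z0, hz0, hz⟩

theorem mulαα' (h : IsJAlg e α) {t w : A} (ht : t ∈ eigSet e α) (hw : w ∈ eigSet e α) :
    InB F e (t * w) := mulαα_inB h ht hw

theorem mul_e1 (h : IsJAlg e α) {v : A} (hv : v ∈ eigSet e (1 : F)) : e * v = v := by
  rw [mem_eig.mp hv, one_smul]

theorem mul_eB (h : IsJAlg e α) {w : A} (hw : InB F e w) :
    e * w ∈ eigSet e (1 : F) ∧ InB F e (e * w) := by
  obtain ⟨w1, hw1, w0, hw0, rfl⟩ := hw
  have : e * (w1 + w0) = w1 := by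
    rw [mul_add, mul_e1 h hw1, mem_eig.mp hw0, zero_smul, add_zero]
  rw [this]
  exact ⟨hw1, InB_of1 hw1⟩

/-- powers of `e` acting -/
theorem Epow_one (h : IsJAlg e α) {v : A} (hv : v ∈ eigSet e (1 : F)) (k : ℕ) :
    Lmul (List.replicate k e) v = v := by
  induction k with
  | zero => rfl
  | succ k ih => rw [List.replicate_succ, Lmul_cons, ih, mul_e1 h hv]

theorem Epow_alpha (h : IsJAlg e α) {v : A} (hv : v ∈ eigSet e α) (k : ℕ) :
    Lmul (List.replicate k e) v = (α ^ k) • v := by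
  induction k with
  | zero => simp [Lmul_nil]
  | succ k ih =>
    rw [List.replicate_succ, Lmul_cons, ih, mul_smul_comm, mem_eig.mp hv,
      smul_smul, ← pow_succ]

theorem Epow_zero (h : IsJAlg e α) {v : A} (hv : v ∈ eigSet e (0 : F)) {k : ℕ}
    (hk : 0 < k) : Lmul (List.replicate k e) v = 0 := by
  obtain ⟨m, rfl⟩ : ∃ m, k = m + 1 := ⟨k - 1, by omega⟩
  rw [show List.replicate (m+1) e = List.replicate m e ++ [e] by
    rw [← List.replicate_succ']
  ]
  rw [Lmul_append, Lmul_single, mem_eig.mp hv, zero_smul, Lmul_zero]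

theorem Epow_inB (h : IsJAlg e α) {w : A} (hw : InB F e w) (k : ℕ) :
    InB F e (Lmul (List.replicate k e) w) := by
  induction k with
  | zero => exact hw
  | succ k ih => rw [List.replicate_succ, Lmul_cons]; exact (mul_eB h ih).2

theorem Epow_decomp (h : IsJAlg e α) {k : ℕ} (hk : 0 < k) (v : A) :
    Lmul (List.replicate k e) v = p1 h v + (α ^ k) • pa h v := by
  obtain ⟨q1, q0, qa, hq⟩ := p_spec h v
  calc Lmul (List.replicate k e) v
      = Lmul (List.replicate k e) (p1 h v + p0 h v + pa h v) := by rw [← hq]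
    _ = p1 h v + (α ^ k) • pa h v := by
        rw [Lmul_add, Lmul_add, Epow_one h q1, Epow_zero h q0 hk, Epow_alpha h qa, add_zero]

/-- chains of `A₀` elements -/
theorem chain_alpha (h : IsJAlg e α) {l : List A} (hl : ∀ x ∈ l, x ∈ eigSet e (0 : F))
    {v : A} (hv : v ∈ eigSet e α) : Lmul l v ∈ eigSet e α := by
  induction l with
  | nil => exact hv
  | cons s l ih =>
    rw [Lmul_cons]
    exact mul0α h (hl s (by simp)) (ih (fun x hx => hl x (by simp [hx])))

theorem chain_A0 (h : IsJAlg e α) {l : List A} (hl : ∀ x ∈ l, x ∈ eigSet e (0 : F))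
    {v : A} (hv : v ∈ eigSet e (0 : F)) : Lmul l v ∈ eigSet e (0 : F) := by
  induction l with
  | nil => exact hv
  | cons s l ih =>
    rw [Lmul_cons]
    exact mul00 h (hl s (by simp)) (ih (fun x hx => hl x (by simp [hx])))

theorem chain_kill1 (h : IsJAlg e α) {l : List A} (hl : ∀ x ∈ l, x ∈ eigSet e (0 : F))
    {v : A} (hv : v ∈ eigSet e (1 : F)) (hne : l ≠ []) : Lmul l v = 0 := by
  induction l with
  | nil => exact absurd rfl hne
  | cons s l ih =>
    rcases l with _ | ⟨u, l'⟩
    · rw [Lmul_single]; exact mul01 h (hl s (by simp)) hv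
    · rw [Lmul_cons, ih (fun x hx => hl x (by simp [hx])) (by simp), mul_zero]

theorem chain_B (h : IsJAlg e α) {l : List A} (hl : ∀ x ∈ l, x ∈ eigSet e (0 : F))
    {v : A} (hv : InB F e v) (hne : l ≠ []) : Lmul l v ∈ eigSet e (0 : F) := by
  induction l with
  | nil => exact absurd rfl hne
  | cons s l ih =>
    rcases l with _ | ⟨u, l'⟩
    · rw [Lmul_single]; exact mul0B h (hl s (by simp)) hv
    · rw [Lmul_cons]
      exact mul00 h (hl s (by simp)) (ih (fun x hx => hl x (by simp [hx])) (by simp))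

end Mul2
end JAddProof
namespace JAddProof
section Kill
variable {F A : Type*} [Field F] [NonUnitalNonAssocCommRing A] [Module F A]
  [SMulCommClass F A A] [IsScalarTower F A A]
variable {e : A} {α : F}

theorem comp_mul0 (h : IsJAlg e α) {s : A} (hs : s ∈ eigSet e (0 : F)) (v : A) :
    p1 h (s * v) = 0 ∧ p0 h (s * v) = s * p0 h v ∧ pa h (s * v) = s * pa h v := by
  obtain ⟨q1, q0, qa, hq⟩ := p_spec h v
  have hsv : s * v = 0 + s * p0 h v + s * pa h v := by
    calc s * v = s * (p1 h v + p0 h v + pa h v) := by rw [← hq]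
      _ = 0 + s * p0 h v + s * pa h v := by
          rw [mul_add, mul_add, mul01 h hs q1]
  exact comp_unique h (eig_zero e 1) (mul00 h hs q0) (mul0α h hs qa) hsv

theorem kill_all (h : IsJAlg e α) (hm : MartindaleJ e α) {v : A}
    (hv : ∀ u : A, u * v = 0) : v = 0 := by
  obtain ⟨q1, q0, qa, hq⟩ := p_spec h v
  have h0 : ∀ s ∈ eigSet e (0 : F), s * p0 h v = 0 ∧ s * pa h v = 0 := by
    intro s hs
    obtain ⟨c1, c0, ca⟩ := comp_mul0 h hs v
    rw [hv s] at c0 ca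
    obtain ⟨z1, z0, za⟩ := proj_of_mem0 h (eig_zero e (0 : F))
    constructor
    · rw [← c0, z0]
    · rw [← ca, za]
  have hp0 : p0 h v = 0 := hm.2.2.1 _ q0 (fun t ht => (h0 t ht).1)
  have hpa : pa h v = 0 := hm.2.2.2 _ qa (fun t ht => (h0 t ht).2)
  have hv1 : v ∈ eigSet e (1 : F) := mem1_of_proj h hp0 hpa
  exact hm.1 _ hv1 (fun t _ => hv t)

theorem kill_words (h : IsJAlg e α) (hm : MartindaleJ e α) :
    ∀ (k : ℕ) {v : A}, (∀ ts : List A, ts.length = k → Lmul ts v = 0) → v = 0 := by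
  intro k
  induction k with
  | zero => intro v hv; simpa [Lmul_nil] using hv [] rfl
  | succ k ih =>
    intro v hv
    apply kill_all h hm
    intro u
    apply ih
    intro ts hts
    have := hv (ts ++ [u]) (by simp [hts])
    rwa [Lmul_append, Lmul_single] at this

theorem killA0_words (h : IsJAlg e α) (hm : MartindaleJ e α) :
    ∀ (k : ℕ) {v : A},
      (∀ ts : List A, ts.length = k → (∀ x ∈ ts, x ∈ eigSet e (0 : F)) → Lmul ts v = 0) →
      p0 h v = 0 ∧ pa h v = 0 := by
  intro k
  induction k with
  | zero =>
    intro v hv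
    have : v = 0 := by simpa [Lmul_nil] using hv [] rfl (by simp)
    subst this
    have := proj_of_mem0 h (eig_zero e (0 : F))
    exact ⟨this.2.1, this.2.2⟩
  | succ k ih =>
    intro v hv
    have key : ∀ s ∈ eigSet e (0 : F), s * p0 h v = 0 ∧ s * pa h v = 0 := by
      intro s hs
      have hsv : p0 h (s * v) = 0 ∧ pa h (s * v) = 0 := by
        apply ih
        intro ts hts hmem
        have := hv (ts ++ [s]) (by simp [hts]) (by
          intro x hx
          rcases List.mem_append.mp hx with h' | h'
          · exact hmem x h'
          · simp at h'; subst h'; exact hs)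
        rwa [Lmul_append, Lmul_single] at this
      obtain ⟨c1, c0, ca⟩ := comp_mul0 h hs v
      exact ⟨by rw [← c0, hsv.1], by rw [← ca, hsv.2]⟩
    constructor
    · exact hm.2.2.1 _ (p_spec h v).2.1 (fun t ht => (key t ht).1)
    · exact hm.2.2.2 _ (p_spec h v).2.2.1 (fun t ht => (key t ht).2)

end Kill
end JAddProof
namespace JAddProof
section Fbasic
variable {F A : Type*} [Field F] [NonUnitalNonAssocCommRing A] [Module F A]
  [SMulCommClass F A A] [IsScalarTower F A A]
variable {e : A} {α : F} {r : ℕ} {f : List A → A}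

theorem f_single (hf : IsNullifying f r) (x : A) : f [x] = 0 := hf.2.2.2.1 x

theorem f_perm (hf : IsNullifying f r) {l l' : List A} (hp : l.Perm l') : f l = f l' :=
  hf.2.1 l l' hp

theorem f_II (hf : IsNullifying f r) {s t : List A} (hs : s ≠ []) (ht : t ≠ []) :
    (f (s ++ [t.sum]) = f (s ++ t)) ↔ f t = 0 := hf.2.2.1 s t hs ht

theorem f_V (hf : IsNullifying f r) {ts : List A} (hts : ts.length = r) (l : List A) :
    Lmul ts (f l) = f (l.map (Lmul ts)) := hf.2.2.2.2.2 ts hts l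

theorem f_swap (hf : IsNullifying f r) (x y : A) (l : List A) :
    f (x :: y :: l) = f (y :: x :: l) := by
  apply f_perm hf
  exact List.Perm.swap y x l

theorem f_rot (hf : IsNullifying f r) (x : A) (l : List A) :
    f (l ++ [x]) = f (x :: l) := by
  apply f_perm hf
  simpa using (List.perm_middle (a := x) (l₁ := l) (l₂ := []))

theorem f_pair_zero (hf : IsNullifying f r) (x : A) : f [x, 0] = 0 := by
  have := hf.2.2.2.2.1 [x] (by simp)
  simpa [f_single hf] using this

theorem f_zero_pair (hf : IsNullifying f r) (x : A) : f [0, x] = 0 := by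
  rw [f_swap hf]; exact f_pair_zero hf x

theorem f_triple_zero (hf : IsNullifying f r) (x y : A) : f [x, y, 0] = 0 ↔ f [x, y] = 0 := by
  have := hf.2.2.2.2.1 [x, y] (by simp)
  constructor <;> intro h' <;> simp_all

theorem f_V2 (hf : IsNullifying f r) {ts : List A} (hts : ts.length = r) (x y : A) :
    Lmul ts (f [x, y]) = f [Lmul ts x, Lmul ts y] := by
  simpa using f_V hf hts [x, y]

theorem f_V4 (hf : IsNullifying f r) {ts : List A} (hts : ts.length = r) (x y z w : A) :
    Lmul ts (f [x, y, z, w]) = f [Lmul ts x, Lmul ts y, Lmul ts z, Lmul ts w] := by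
  simpa using f_V hf hts [x, y, z, w]

theorem f_merge2 (hf : IsNullifying f r) (z x y : A) (hxy : f [x, y] = 0) :
    f [z, x + y] = f [z, x, y] := by
  have := (f_II hf (s := [z]) (t := [x, y]) (by simp) (by simp)).mpr hxy
  simpa using this

theorem f_merge2' (hf : IsNullifying f r) (z w x y : A) (hxy : f [x, y] = 0) :
    f [z, w, x + y] = f [z, w, x, y] := by
  have := (f_II hf (s := [z, w]) (t := [x, y]) (by simp) (by simp)).mpr hxy
  simpa using this

theorem f_unmerge (hf : IsNullifying f r) (z x y : A)
    (hzsum : f [z, x + y] = f [z, x, y]) : f [x, y] = 0 := by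
  apply (f_II hf (s := [z]) (t := [x, y]) (by simp) (by simp)).mp
  simpa using hzsum

end Fbasic

section Facts
variable {F A : Type*} [Field F] [NonUnitalNonAssocCommRing A] [Module F A]
  [SMulCommClass F A A] [IsScalarTower F A A]
variable {e : A} {α : F} {r : ℕ} {f : List A → A}

theorem factA1 (h : IsJAlg e α) (hm : MartindaleJ e α) (hf : IsNullifying f r)
    {w : A} (hw : w ∈ eigSet e (1 : F)) (y : A) :
    p0 h (f [w, y]) = 0 ∧ pa h (f [w, y]) = 0 := by
  have hr : 0 < r := hf.1
  apply killA0_words h hm r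
  intro ts hlen hmem
  have hne : ts ≠ [] := by
    intro h'; rw [h'] at hlen; simp at hlen; omega
  have h1 : Lmul ts w = 0 := chain_kill1 h hmem hw hne
  rw [f_V2 hf hlen, h1, f_zero_pair hf]

theorem factA1' (h : IsJAlg e α) (hm : MartindaleJ e α) (hf : IsNullifying f r)
    {w : A} (hw : w ∈ eigSet e (1 : F)) (y : A) :
    f [w, y] ∈ eigSet e (1 : F) := by
  obtain ⟨h0, ha⟩ := factA1 h hm hf hw y
  exact mem1_of_proj h h0 ha

theorem factA0 (h : IsJAlg e α) (hm : MartindaleJ e α) (hf : IsNullifying f r)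
    {b : A} (hb : b ∈ eigSet e (0 : F)) (y : A) :
    p1 h (f [b, y]) = 0 ∧ pa h (f [b, y]) = 0 := by
  have hr : 0 < r := hf.1
  have hE : Lmul (List.replicate r e) (f [b, y]) = 0 := by
    rw [f_V2 hf (by simp), Epow_zero h hb hr, f_zero_pair hf]
  rw [Epow_decomp h hr] at hE
  have key := sum_eq_zero h (p_spec h (f [b, y])).1 (eig_zero e 0)
    (eig_smul (α ^ r) (p_spec h (f [b, y])).2.2.1)
    (by rw [add_zero]; exact hE)
  exact ⟨key.1, smul_cancel (pow_ne_zero r h.hα0) key.2.2⟩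

theorem factA0' (h : IsJAlg e α) (hm : MartindaleJ e α) (hf : IsNullifying f r)
    {b : A} (hb : b ∈ eigSet e (0 : F)) (y : A) :
    f [b, y] ∈ eigSet e (0 : F) := by
  obtain ⟨h1, ha⟩ := factA0 h hm hf hb y
  exact mem0_of_proj h h1 ha

theorem factB (h : IsJAlg e α) (hm : MartindaleJ e α) (hf : IsNullifying f r)
    {w : A} (hw : InB F e w) (y : A) : pa h (f [w, y]) = 0 := by
  have hr : 0 < r := hf.1
  obtain ⟨w1, hw1, w0, hw0, rfl⟩ := hw
  have hEw : Lmul (List.replicate r e) (w1 + w0) = w1 := by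
    rw [Lmul_add, Epow_one h hw1, Epow_zero h hw0 hr, add_zero]
  have hEX : Lmul (List.replicate r e) (f [w1 + w0, y])
      = f [w1, Lmul (List.replicate r e) y] := by
    rw [f_V2 hf (by simp), hEw]
  have hmem : Lmul (List.replicate r e) (f [w1 + w0, y]) ∈ eigSet e (1 : F) := by
    rw [hEX]; exact factA1' h hm hf hw1 _
  rw [Epow_decomp h hr] at hmem
  set X := f [w1 + w0, y]
  have key := comp_unique h (x := p1 h X + (α ^ r) • pa h X) (p_spec h X).1 (eig_zero e 0)
    (eig_smul (α ^ r) (p_spec h X).2.2.1) (by rw [add_zero])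
  have key2 := proj_of_mem1 h hmem
  have : (α ^ r) • pa h X = 0 := by rw [← key.2.2, key2.2.2]
  exact smul_cancel (pow_ne_zero r h.hα0) this

theorem factB' (h : IsJAlg e α) (hm : MartindaleJ e α) (hf : IsNullifying f r)
    {w : A} (hw : InB F e w) (y : A) : pa h (f [y, w]) = 0 := by
  rw [f_swap hf]; exact factB h hm hf hw y

end Facts
end JAddProof
namespace JAddProof
section Cross
variable {F A : Type*} [Field F] [NonUnitalNonAssocCommRing A] [Module F A]
  [SMulCommClass F A A] [IsScalarTower F A A]
variable {e : A} {α : F} {r : ℕ} {f : List A → A}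

theorem crossT (h : IsJAlg e α) (hm : MartindaleJ e α) (hf : IsNullifying f r)
    {w p : A} (hw : InB F e w) (hp : p ∈ eigSet e α) : f [w, p] = 0 := by
  have hr : 0 < r := hf.1
  have hXa : pa h (f [w, p]) = 0 := factB h hm hf hw p
  obtain ⟨w1, hw1, w0, hw0, hwe⟩ := hw
  have hwB : InB F e w := ⟨w1, hw1, w0, hw0, hwe⟩
  set X := f [w, p] with hXdef
  set X' := f [w1, (α ^ r) • p] with hX'def
  have hEX : Lmul (List.replicate r e) X = X' := by
    rw [hXdef, f_V2 hf (by simp)]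
    have h1 : Lmul (List.replicate r e) w = w1 := by
      rw [hwe, Lmul_add, Epow_one h hw1, Epow_zero h hw0 hr, add_zero]
    have h2 : Lmul (List.replicate r e) p = (α ^ r) • p := Epow_alpha h hp r
    rw [h1, h2]
  have hX'A1 : X' ∈ eigSet e (1 : F) := factA1' h hm hf hw1 _
  have hX'eq : X' = p1 h X := by
    rw [← hEX, Epow_decomp h hr, hXa, smul_zero, add_zero]
  have kill1 : ∀ t ∈ eigSet e α, t * X' = 0 := by
    intro t ht
    have hlen : (t :: List.replicate (r - 1) e).length = r := by simp; omega
    have hLX' : Lmul (t :: List.replicate (r - 1) e) X' = t * X' := by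
      rw [Lmul_cons, Epow_one h hX'A1]
    have htr := f_V2 hf hlen w1 ((α ^ r) • p)
    have hw1' : Lmul (t :: List.replicate (r - 1) e) w1 = t * w1 := by
      rw [Lmul_cons, Epow_one h hw1]
    have hp' : Lmul (t :: List.replicate (r - 1) e) ((α ^ r) • p)
        = t * ((α ^ (r - 1)) • ((α ^ r) • p)) := by
      rw [Lmul_cons, Epow_alpha h (eig_smul _ hp)]
    have hsnd : InB F e (t * ((α ^ (r - 1)) • ((α ^ r) • p))) :=
      mulαα_inB h ht (eig_smul _ (eig_smul _ hp))
    have hpa0 : pa h (t * X') = 0 := by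
      rw [← hLX', hX'def, htr, hw1', hp']
      exact factB' h hm hf hsnd _
    exact eq_zero_of_memα_pa h (mulα1 h ht hX'A1) hpa0
  have hp1 : p1 h X = 0 := by rw [← hX'eq]; exact hm.1 X' hX'A1 kill1
  have hX0 : X ∈ eigSet e (0 : F) := mem0_of_proj h hp1 hXa
  have kill2 : ∀ t ∈ eigSet e α, t * X = 0 := by
    intro t ht
    have htX : t * X ∈ eigSet e α := mulα0 h ht hX0
    have hlen : (List.replicate (r - 1) e ++ [t]).length = r := by simp; omega
    have hLX : Lmul (List.replicate (r - 1) e ++ [t]) X = (α ^ (r - 1)) • (t * X) := by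
      rw [Lmul_append, Lmul_single, Epow_alpha h htX]
    have htr := f_V2 hf hlen w p
    have hw' : Lmul (List.replicate (r - 1) e ++ [t]) w
        = (α ^ (r - 1)) • (t * w) := by
      rw [Lmul_append, Lmul_single, Epow_alpha h (mulαB h ht hwB)]
    have hp2 : Lmul (List.replicate (r - 1) e ++ [t]) p
        = Lmul (List.replicate (r - 1) e) (t * p) := by
      rw [Lmul_append, Lmul_single]
    have hsnd : InB F e (Lmul (List.replicate (r - 1) e) (t * p)) :=
      Epow_inB h (mulαα_inB h ht hp) (r - 1)
    have hpa0 : pa h ((α ^ (r - 1)) • (t * X)) = 0 := by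
      rw [← hLX, hXdef, htr, hw', hp2]
      exact factB' h hm hf hsnd _
    have : (α ^ (r - 1)) • (t * X) = 0 :=
      eq_zero_of_memα_pa h (eig_smul _ htX) hpa0
    exact smul_cancel (pow_ne_zero (r - 1) h.hα0) this
  exact hm.2.1 X hX0 kill2

theorem crossT' (h : IsJAlg e α) (hm : MartindaleJ e α) (hf : IsNullifying f r)
    {w p : A} (hw : InB F e w) (hp : p ∈ eigSet e α) : f [p, w] = 0 := by
  rw [f_swap hf]; exact crossT h hm hf hw hp

theorem absorb (h : IsJAlg e α) (hm : MartindaleJ e α) (hf : IsNullifying f r)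
    {p q b : A} (hp : p ∈ eigSet e α) (hq : q ∈ eigSet e α) (hb : b ∈ eigSet e (0 : F))
    (h0 : f [p + b, q] = 0) : f [p, q] = 0 := by
  have s1 : f [q, p + b] = 0 := by rw [f_swap hf]; exact h0
  have s2 : f [q, p, b] = 0 := by
    rw [← f_merge2 hf q p b (crossT' h hm hf (InB_of0 hb) hp)]
    exact s1
  have lhs1 : f [b, q + p] = 0 := crossT h hm hf (InB_of0 hb) (eig_add hq hp)
  have lhs2 : f [b, q, p] = 0 := by
    have h' : f ([q, p] ++ [b]) = f (b :: [q, p]) := f_rot hf b [q, p]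
    rw [show f [b, q, p] = f (b :: [q, p]) from rfl, ← h']
    exact s2
  have key := (f_II hf (s := [b]) (t := [q, p]) (by simp) (by simp)).mp
  have hqp : f [q, p] = 0 := by
    apply key
    have e1 : f ([b] ++ [List.sum [q, p]]) = 0 := by simpa using lhs1
    have e2 : f ([b] ++ [q, p]) = 0 := by simpa using lhs2
    rw [e1, e2]
  rw [f_swap hf]; exact hqp

end Cross
end JAddProof
namespace JAddProof
section Same
variable {F A : Type*} [Field F] [NonUnitalNonAssocCommRing A] [Module F A]
  [SMulCommClass F A A] [IsScalarTower F A A]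
variable {e : A} {α : F} {r : ℕ} {f : List A → A}

/-- Seed statement: consequence of n-multiplicativity (proven separately for φ and d). -/
def SeedProp (e : A) (α : F) (r : ℕ) (f : List A → A) : Prop :=
  ∀ x ∈ eigSet e α, ∀ y ∈ eigSet e α,
    f [e, (α ^ r) • y, (α ^ r) • x, Lmul (List.replicate (r - 1) e) (x * y)] = 0

theorem dia (h : IsJAlg e α) (hm : MartindaleJ e α) (hf : IsNullifying f r)
    (hseed : SeedProp e α r f) {x y : A} (hx : x ∈ eigSet e α) (hy : y ∈ eigSet e α) :
    f [(α ^ r) • x + Lmul (List.replicate (r - 1) e) (x * y), e + (α ^ r) • y] = 0 := by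
  set Y := (α ^ r) • y with hY
  set X := (α ^ r) • x with hX
  set W := Lmul (List.replicate (r - 1) e) (x * y) with hW
  have hWB : InB F e W := Epow_inB h (mulαα_inB h hx hy) (r - 1)
  have hXα : X ∈ eigSet e α := eig_smul _ hx
  have hYα : Y ∈ eigSet e α := eig_smul _ hy
  have m1 : f [e, Y, X + W] = 0 := by
    rw [f_merge2' hf e Y X W (crossT' h hm hf hWB hXα)]
    exact hseed x hx y hy
  have key : f [X + W, e + Y] = f [X + W, e, Y] := by
    have := (f_II hf (s := [X + W]) (t := [e, Y]) (by simp) (by simp)).mpr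
      (crossT h hm hf (InB_of1 (e_mem h)) hYα)
    simpa using this
  have m2 : f [X + W, e, Y] = 0 := by
    have h' : f ([e, Y] ++ [X + W]) = f ((X + W) :: [e, Y]) := f_rot hf (X + W) [e, Y]
    rw [show f [X + W, e, Y] = f ((X + W) :: [e, Y]) from rfl, ← h']
    exact m1
  rw [key, m2]

theorem Paa (h : IsJAlg e α) (hm : MartindaleJ e α) (hf : IsNullifying f r)
    (hseed : SeedProp e α r f) {x y : A} (hx : x ∈ eigSet e α) (hy : y ∈ eigSet e α) :
    f [x, y] = 0 := by
  have hr : 0 < r := hf.1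
  have hαr : (α ^ r) ≠ 0 := pow_ne_zero r h.hα0
  -- step 1: A₀-chains of length r kill f [x, y]
  have hchain : ∀ ts : List A, ts.length = r →
      (∀ u ∈ ts, u ∈ eigSet e (0 : F)) → Lmul ts (f [x, y]) = 0 := by
    intro ts hlen hmem
    have hne : ts ≠ [] := by intro h'; rw [h'] at hlen; simp at hlen; omega
    set x₀ := (α ^ r)⁻¹ • x with hx₀def
    set y₀ := (α ^ r)⁻¹ • y with hy₀def
    have hx₀ : x₀ ∈ eigSet e α := eig_smul _ hx
    have hy₀ : y₀ ∈ eigSet e α := eig_smul _ hy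
    have hXx : (α ^ r) • x₀ = x := smul_inv_smul₀ hαr x
    have hYy : (α ^ r) • y₀ = y := smul_inv_smul₀ hαr y
    have hdia := dia h hm hf hseed hx₀ hy₀
    rw [hXx, hYy] at hdia
    set W₀ := Lmul (List.replicate (r - 1) e) (x₀ * y₀) with hW₀
    have hW₀B : InB F e W₀ := Epow_inB h (mulαα_inB h hx₀ hy₀) (r - 1)
    -- transport
    have htr := f_V2 hf hlen (x + W₀) (e + y)
    rw [hdia, Lmul_zero] at htr
    have hτe : Lmul ts e = 0 := chain_kill1 h hmem (e_mem h) hne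
    have htr2 : f [Lmul ts x + Lmul ts W₀, Lmul ts y] = 0 := by
      have := htr.symm
      rwa [Lmul_add, Lmul_add, hτe, zero_add] at this
    have habs : f [Lmul ts x, Lmul ts y] = 0 :=
      absorb h hm hf (chain_alpha h hmem hx) (chain_alpha h hmem hy)
        (chain_B h hmem hW₀B hne) htr2
    rw [f_V2 hf hlen, habs]
  obtain ⟨hc0, hca⟩ := killA0_words h hm r hchain
  have hc1 : f [x, y] ∈ eigSet e (1 : F) := mem1_of_proj h hc0 hca
  -- step 2: kill the A₁ part
  have hkill : ∀ t ∈ eigSet e α, t * f [x, y] = 0 := by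
    intro t ht
    have hlen : (t :: List.replicate (r - 1) e).length = r := by simp; omega
    have h1 : Lmul (t :: List.replicate (r - 1) e) (f [x, y]) = t * f [x, y] := by
      rw [Lmul_cons, Epow_one h hc1]
    have h2 := f_V2 hf hlen x y
    have hx' : Lmul (t :: List.replicate (r - 1) e) x = t * ((α ^ (r - 1)) • x) := by
      rw [Lmul_cons, Epow_alpha h hx]
    have hy' : Lmul (t :: List.replicate (r - 1) e) y = t * ((α ^ (r - 1)) • y) := by
      rw [Lmul_cons, Epow_alpha h hy]
    have hfst : InB F e (t * ((α ^ (r - 1)) • x)) := mulαα_inB h ht (eig_smul _ hx)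
    have hpa0 : pa h (t * f [x, y]) = 0 := by
      rw [← h1, h2, hx', hy']
      exact factB h hm hf hfst _
    exact eq_zero_of_memα_pa h (mulα1 h ht hc1) hpa0
  exact hm.1 _ hc1 hkill

theorem P11 (h : IsJAlg e α) (hm : MartindaleJ e α) (hf : IsNullifying f r)
    (hseed : SeedProp e α r f) {a a' : A} (ha : a ∈ eigSet e (1 : F))
    (ha' : a' ∈ eigSet e (1 : F)) : f [a, a'] = 0 := by
  have hu : f [a, a'] ∈ eigSet e (1 : F) := factA1' h hm hf ha a'
  have hkill : ∀ t ∈ eigSet e α, t * f [a, a'] = 0 := by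
    intro t ht
    have hlen : (t :: List.replicate (r - 1) e).length = r := by simp; have := hf.1; omega
    have h1 : Lmul (t :: List.replicate (r - 1) e) (f [a, a']) = t * f [a, a'] := by
      rw [Lmul_cons, Epow_one h hu]
    have h2 := f_V2 hf hlen a a'
    have hx' : Lmul (t :: List.replicate (r - 1) e) a = t * a := by
      rw [Lmul_cons, Epow_one h ha]
    have hy' : Lmul (t :: List.replicate (r - 1) e) a' = t * a' := by
      rw [Lmul_cons, Epow_one h ha']
    rw [← h1, h2, hx', hy']
    exact Paa h hm hf hseed (mulα1 h ht ha) (mulα1 h ht ha')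
  exact hm.1 _ hu hkill

theorem P00 (h : IsJAlg e α) (hm : MartindaleJ e α) (hf : IsNullifying f r)
    (hseed : SeedProp e α r f) {b b' : A} (hb : b ∈ eigSet e (0 : F))
    (hb' : b' ∈ eigSet e (0 : F)) : f [b, b'] = 0 := by
  have hv : f [b, b'] ∈ eigSet e (0 : F) := factA0' h hm hf hb b'
  have hkill : ∀ t ∈ eigSet e α, t * f [b, b'] = 0 := by
    intro t ht
    have hlen : (List.replicate (r - 1) e ++ [t]).length = r := by simp; have := hf.1; omega
    have h1 : Lmul (List.replicate (r - 1) e ++ [t]) (f [b, b'])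
        = (α ^ (r - 1)) • (t * f [b, b']) := by
      rw [Lmul_append, Lmul_single, Epow_alpha h (mulα0 h ht hv)]
    have h2 := f_V2 hf hlen b b'
    have hx' : Lmul (List.replicate (r - 1) e ++ [t]) b = (α ^ (r - 1)) • (t * b) := by
      rw [Lmul_append, Lmul_single, Epow_alpha h (mulα0 h ht hb)]
    have hy' : Lmul (List.replicate (r - 1) e ++ [t]) b' = (α ^ (r - 1)) • (t * b') := by
      rw [Lmul_append, Lmul_single, Epow_alpha h (mulα0 h ht hb')]
    have hz : (α ^ (r - 1)) • (t * f [b, b']) = 0 := by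
      rw [← h1, h2, hx', hy']
      exact Paa h hm hf hseed (eig_smul _ (mulα0 h ht hb)) (eig_smul _ (mulα0 h ht hb'))
    exact smul_cancel (pow_ne_zero (r - 1) h.hα0) hz
  exact hm.2.1 _ hv hkill

theorem PBB (h : IsJAlg e α) (hm : MartindaleJ e α) (hf : IsNullifying f r)
    (hseed : SeedProp e α r f) {w w' : A} (hw : InB F e w) (hw' : InB F e w') :
    f [w, w'] = 0 := by
  have hr : 0 < r := hf.1
  have hXa : pa h (f [w, w']) = 0 := factB h hm hf hw w'
  obtain ⟨w1, hw1, w0, hw0, hwe⟩ := hw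
  obtain ⟨v1, hv1, v0, hv0, hve⟩ := hw'
  have hwB : InB F e w := ⟨w1, hw1, w0, hw0, hwe⟩
  have hw'B : InB F e w' := ⟨v1, hv1, v0, hv0, hve⟩
  have hE : Lmul (List.replicate r e) (f [w, w']) = f [w1, v1] := by
    rw [f_V2 hf (by simp)]
    have e1 : Lmul (List.replicate r e) w = w1 := by
      rw [hwe, Lmul_add, Epow_one h hw1, Epow_zero h hw0 hr, add_zero]
    have e2 : Lmul (List.replicate r e) w' = v1 := by
      rw [hve, Lmul_add, Epow_one h hv1, Epow_zero h hv0 hr, add_zero]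
    rw [e1, e2]
  have hp1 : p1 h (f [w, w']) = 0 := by
    have := hE
    rw [Epow_decomp h hr, hXa, smul_zero, add_zero, P11 h hm hf hseed hw1 hv1] at this
    exact this
  have hX0 : f [w, w'] ∈ eigSet e (0 : F) := mem0_of_proj h hp1 hXa
  have hkill : ∀ t ∈ eigSet e α, t * f [w, w'] = 0 := by
    intro t ht
    have hlen : (List.replicate (r - 1) e ++ [t]).length = r := by simp; omega
    have h1 : Lmul (List.replicate (r - 1) e ++ [t]) (f [w, w'])
        = (α ^ (r - 1)) • (t * f [w, w']) := by
      rw [Lmul_append, Lmul_single, Epow_alpha h (mulα0 h ht hX0)]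
    have h2 := f_V2 hf hlen w w'
    have hx' : Lmul (List.replicate (r - 1) e ++ [t]) w = (α ^ (r - 1)) • (t * w) := by
      rw [Lmul_append, Lmul_single, Epow_alpha h (mulαB h ht hwB)]
    have hy' : Lmul (List.replicate (r - 1) e ++ [t]) w' = (α ^ (r - 1)) • (t * w') := by
      rw [Lmul_append, Lmul_single, Epow_alpha h (mulαB h ht hw'B)]
    have hz : (α ^ (r - 1)) • (t * f [w, w']) = 0 := by
      rw [← h1, h2, hx', hy']
      exact Paa h hm hf hseed (eig_smul _ (mulαB h ht hwB)) (eig_smul _ (mulαB h ht hw'B))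
    exact smul_cancel (pow_ne_zero (r - 1) h.hα0) hz
  exact hm.2.1 _ hX0 hkill

theorem main_vanish (h : IsJAlg e α) (hm : MartindaleJ e α) (hf : IsNullifying f r)
    (hseed : (∀ p ∈ eigSet e α, f [e, p] = 0) → SeedProp e α r f) (x y : A) :
    f [x, y] = 0 := by
  have hcross : ∀ p ∈ eigSet e α, f [e, p] = 0 := fun p hp =>
    crossT h hm hf (InB_of1 (e_mem h)) hp
  have hs : SeedProp e α r f := hseed hcross
  obtain ⟨q1, q0, qa, hq⟩ := p_spec h x
  obtain ⟨u1, u0, ua, hu⟩ := p_spec h y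
  set xB := p1 h x + p0 h x with hxB
  set yB := p1 h y + p0 h y with hyB
  have hxBB : InB F e xB := ⟨_, q1, _, q0, rfl⟩
  have hyBB : InB F e yB := ⟨_, u1, _, u0, rfl⟩
  have hxe : x = xB + pa h x := hq
  have hye : y = yB + pa h y := hu
  -- f [x, y] = f [y, xB, pa x]
  have s1 : f [y, x] = f [y, xB, pa h x] := by
    rw [show f [y, x] = f [y, xB + pa h x] by rw [← hxe]]
    exact f_merge2 hf y xB (pa h x) (crossT h hm hf hxBB qa)
  -- f [y, xB, pa x] = f [xB, pa x, y] = f [xB, pa x, yB, pa y]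
  have s2 : f [y, xB, pa h x] = f [xB, pa h x, y] := by
    have h' : f ([xB, pa h x] ++ [y]) = f (y :: [xB, pa h x]) := f_rot hf y [xB, pa h x]
    exact h'.symm
  have s3 : f [xB, pa h x, y] = f [xB, pa h x, yB, pa h y] := by
    rw [show f [xB, pa h x, y] = f [xB, pa h x, yB + pa h y] by rw [← hye]]
    have := (f_II hf (s := [xB, pa h x]) (t := [yB, pa h y]) (by simp) (by simp)).mpr
      (crossT h hm hf hyBB ua)
    simpa using this
  -- swap to [xB, yB, pa x, pa y]
  have s4 : f [xB, pa h x, yB, pa h y] = f [xB, yB, pa h x, pa h y] := by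
    have := f_swap hf (pa h x) yB [pa h y]
    calc f [xB, pa h x, yB, pa h y] = f (xB :: (pa h x :: yB :: [pa h y])) := rfl
      _ = f (xB :: (yB :: pa h x :: [pa h y])) := by
          apply f_perm hf
          exact List.Perm.cons xB (List.Perm.swap yB (pa h x) [pa h y])
  -- merge the α-parts
  have s5 : f [xB, yB, pa h x, pa h y] = f [xB, yB, pa h x + pa h y] := by
    rw [f_merge2' hf xB yB (pa h x) (pa h y) (Paa h hm hf hs qa ua)]
  -- rotate and merge the B-parts
  have s6 : f [xB, yB, pa h x + pa h y] = f [pa h x + pa h y, xB, yB] := by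
    have h' : f ([xB, yB] ++ [pa h x + pa h y]) = f ((pa h x + pa h y) :: [xB, yB]) :=
      f_rot hf _ [xB, yB]
    exact h'
  have s7 : f [pa h x + pa h y, xB, yB] = f [pa h x + pa h y, xB + yB] := by
    have := (f_II hf (s := [pa h x + pa h y]) (t := [xB, yB]) (by simp) (by simp)).mpr
      (PBB h hm hf hs hxBB hyBB)
    simpa using this.symm
  have s8 : f [pa h x + pa h y, xB + yB] = 0 :=
    crossT' h hm hf (InB_add hxBB hyBB) (eig_add qa ua)
  have : f [y, x] = 0 := by rw [s1, s2, s3, s4, s5, s6, s7, s8]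
  rw [f_swap hf]; exact this

end Same
end JAddProof
namespace JAddProof
section Phi
variable {F A A' : Type*} [Field F] [NonUnitalNonAssocCommRing A] [Module F A]
  [SMulCommClass F A A] [IsScalarTower F A A] [NonUnitalNonAssocCommRing A']
variable {e : A} {α : F}

theorem phi_additive (h : IsJAlg e α) (hm : MartindaleJ e α) {n : ℕ} (hn : 2 ≤ n)
    (φ : A → A') (hb : Function.Bijective φ)
    (hmul : ∀ ts : List A, ts.length = n - 1 → ∀ x : A,
      φ (Lmul ts x) = Lmul (ts.map φ) (φ x)) :
    ∀ x y : A, φ (x + y) = φ x + φ y := by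
  have hne : Nonempty A := ⟨0⟩
  set r := n - 1 with hrdef
  have hr : 0 < r := by omega
  set ψ := Function.invFun φ with hψdef
  have hlι : Function.LeftInverse ψ φ := Function.leftInverse_invFun hb.1
  have hrι : Function.RightInverse ψ φ := Function.rightInverse_invFun hb.2
  -- φ 0 = 0
  have hφ0 : φ 0 = 0 := by
    have hz : φ (ψ 0) = 0 := hrι 0
    have h2 : φ (Lmul (List.replicate r (0 : A)) (ψ 0)) = 0 := by
      rw [hmul _ (by simp [hrdef]), hz, Lmul_zero]
    have h3 : Lmul (List.replicate r (0 : A)) (ψ 0) = ψ 0 := hb.1 (by rw [h2, hz])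
    have h4 : Lmul (List.replicate r (0 : A)) (ψ 0) = 0 := by
      obtain ⟨k, hk⟩ : ∃ k, r = k + 1 := ⟨r - 1, by omega⟩
      rw [hk, List.replicate_succ, Lmul_cons, zero_mul]
    have hψ0 : ψ 0 = 0 := by rw [← h3, h4]
    rw [← hψ0, hz]
  set f : List A → A := fun l => ψ (l.map φ).sum - l.sum with hfdef
  have hfeq : ∀ l : List A, f l = 0 ↔ φ l.sum = (l.map φ).sum := by
    intro l
    constructor
    · intro h'
      have h2 : ψ (l.map φ).sum = l.sum := by
        have := sub_eq_zero.mp h'; exact this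
      rw [← h2, hrι]
    · intro h'
      have : ψ (l.map φ).sum = l.sum := by rw [← h', hlι]
      simp [hfdef, this]
  have hnull : IsNullifying f r := by
    refine ⟨hr, ?_, ?_, ?_, ?_, ?_⟩
    · intro l l' hp
      simp only [hfdef]
      rw [hp.sum_eq, (hp.map φ).sum_eq]
    · intro s t hs ht
      simp only [hfdef, List.map_append, List.sum_append, List.map_cons, List.map_nil,
        List.sum_cons, List.sum_nil, add_zero]
      constructor
      · intro heq
        have h2 : ψ ((s.map φ).sum + φ t.sum) = ψ ((s.map φ).sum + (t.map φ).sum) :=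
          sub_left_inj.mp heq
        have h3 := congrArg φ h2
        rw [hrι, hrι] at h3
        have h4 : φ t.sum = (t.map φ).sum := add_left_cancel h3
        have : ψ (t.map φ).sum = t.sum := by rw [← h4, hlι]
        rw [this, sub_self]
      · intro hft
        have h4 : ψ (t.map φ).sum = t.sum := sub_eq_zero.mp hft
        have h5 : φ t.sum = (t.map φ).sum := by rw [← h4, hrι]
        rw [h5]
    · intro x; simp [hfdef, hlι x]
    · intro s hs
      simp [hfdef, hφ0]
    · intro ts hts l
      have hmul' : ∀ u : A, φ (Lmul ts u) = Lmul (ts.map φ) (φ u) :=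
        hmul ts (by rw [hts])
      have key : φ (Lmul ts (ψ (l.map φ).sum)) = ((l.map (Lmul ts)).map φ).sum := by
        rw [hmul', hrι, Lmul_sum, List.map_map, List.map_map]
        congr 1
        apply List.map_congr_left
        intro v _
        exact (hmul' v).symm
      have key2 : ψ (((l.map (Lmul ts)).map φ).sum) = Lmul ts (ψ (l.map φ).sum) := by
        rw [← key, hlι]
      simp only [hfdef]
      rw [Lmul_sub, key2, Lmul_sum]
  -- seed
  have hseed : (∀ p ∈ eigSet e α, f [e, p] = 0) → SeedProp e α r f := by
    intro hcross x hx y hy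
    have hφadd : ∀ p, p ∈ eigSet e α → φ (e + p) = φ e + φ p := by
      intro p hp
      have := (hfeq [e, p]).mp (hcross p hp)
      simpa using this
    obtain ⟨k, hk⟩ : ∃ k, r = k + 1 := ⟨r - 1, by omega⟩
    have hk' : r - 1 = k := by omega
    set us : List A := List.replicate k e ++ [e + x] with husdef
    have hlen : us.length = n - 1 := by simp [husdef]; omega
    -- the four products
    set W : A := Lmul (List.replicate k e) (x * y) with hWdef
    have hP2 : Lmul (List.replicate k e) (e * y) = (α ^ r) • y := by
      rw [show e * y = α • y from mem_eig.mp hy, Lmul_smul, Epow_alpha h hy, smul_smul,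
        ← pow_succ', hk]
    have hP3 : Lmul (List.replicate k e) (x * e) = (α ^ r) • x := by
      rw [mul_comm, show e * x = α • x from mem_eig.mp hx, Lmul_smul, Epow_alpha h hx,
        smul_smul, ← pow_succ', hk]
    have hPee : Lmul (List.replicate k e) (e * e) = e := by
      rw [h.idem, Epow_one h (e_mem h)]
    -- S computation
    have hSprod : Lmul us (e + y) = Lmul (List.replicate k e) ((e + x) * (e + y)) := by
      rw [husdef, Lmul_append, Lmul_single]
    have hSsum : Lmul us (e + y) = e + ((α ^ r) • y + ((α ^ r) • x + W)) := by
      rw [hSprod, add_mul, mul_add, mul_add, Lmul_add, Lmul_add, Lmul_add,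
        hPee, hP2, hP3, hWdef]
      abel
    -- φ expansion
    have hT : ∀ v w : A, Lmul (List.replicate k (φ e)) (φ v * φ w)
        = φ (Lmul (List.replicate k e) (v * w)) := by
      intro v w
      have := hmul (List.replicate k e ++ [v]) (by simp; omega) w
      rw [Lmul_append, Lmul_single] at this
      rw [this, List.map_append, List.map_replicate]
      simp [Lmul_append, Lmul_single]
    have hφS : φ (Lmul us (e + y))
        = φ e + (φ ((α ^ r) • y) + (φ ((α ^ r) • x) + φ W)) := by
      rw [hmul us hlen, husdef, List.map_append, List.map_replicate]
      simp only [List.map_cons, List.map_nil]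
      rw [Lmul_append, Lmul_single, hφadd x hx, hφadd y hy, add_mul, mul_add, mul_add,
        Lmul_add, Lmul_add, Lmul_add, hT e e, hT e y, hT x e, hT x y, hPee, hP2, hP3,
        ← hWdef]
      abel
    -- conclude
    show f [e, (α ^ r) • y, (α ^ r) • x, Lmul (List.replicate (r-1) e) (x * y)] = 0
    rw [hk']
    apply (hfeq _).mpr
    have hsum : List.sum [e, (α ^ r) • y, (α ^ r) • x, Lmul (List.replicate k e) (x * y)]
        = Lmul us (e + y) := by
      rw [hSsum]; simp [hWdef]
    have hmapsum : (List.map φ [e, (α ^ r) • y, (α ^ r) • x,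
        Lmul (List.replicate k e) (x * y)]).sum
        = φ e + (φ ((α ^ r) • y) + (φ ((α ^ r) • x) + φ W)) := by
      simp [hWdef]
    rw [hsum, hmapsum, hφS]
  -- final
  intro x y
  have hv := main_vanish h hm hnull hseed x y
  have := (hfeq [x, y]).mp hv
  simpa using this

end Phi
end JAddProof
namespace JAddProof
section Der
variable {F A : Type*} [Field F] [NonUnitalNonAssocCommRing A] [Module F A]
  [SMulCommClass F A A] [IsScalarTower F A A]
variable {e : A} {α : F}

theorem list_sum_map_add {R : Type*} [NonUnitalNonAssocCommRing R] (l : List R)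
    (g h' : R → R) : (l.map (fun v => g v + h' v)).sum = (l.map g).sum + (l.map h').sum := by
  induction l with
  | nil => simp
  | cons a as ih => simp [ih]; abel

theorem list_sum_map_finsum {R : Type*} [NonUnitalNonAssocCommRing R] (l : List R)
    (m : ℕ) (G : ℕ → R → R) :
    (l.map (fun v => ∑ i ∈ Finset.range m, G i v)).sum
      = ∑ i ∈ Finset.range m, (l.map (G i)).sum := by
  induction l with
  | nil => simp
  | cons a as ih => simp [ih, Finset.sum_add_distrib]

theorem d_additive (h : IsJAlg e α) (hm : MartindaleJ e α) {n : ℕ} (hn : 2 ≤ n)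
    (d : A → A)
    (hd : ∀ ts : List A, ts.length = n - 1 → ∀ x : A,
      d (Lmul ts x) =
        (∑ i ∈ Finset.range (n - 1), Lmul (ts.set i (d (ts.getD i 0))) x) +
          Lmul ts (d x)) :
    ∀ x y : A, d (x + y) = d x + d y := by
  set r := n - 1 with hrdef
  have hr : 0 < r := by omega
  -- d 0 = 0
  have hd0 : d 0 = 0 := by
    have h0 := hd (List.replicate r (0 : A)) (by simp [hrdef]) 0
    rw [Lmul_zero] at h0
    have h1 : ∀ i ∈ Finset.range (n - 1),
        Lmul ((List.replicate r (0 : A)).set i (d ((List.replicate r (0:A)).getD i 0))) (0:A)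
          = 0 := fun i _ => Lmul_zero _
    rw [Finset.sum_congr rfl h1, Finset.sum_const_zero, zero_add] at h0
    have h2 : Lmul (List.replicate r (0 : A)) (d 0) = 0 := by
      obtain ⟨k, hk⟩ : ∃ k, r = k + 1 := ⟨r - 1, by omega⟩
      rw [hk, List.replicate_succ, Lmul_cons, zero_mul]
    rw [h0, h2]
  set f : List A → A := fun l => d l.sum - (l.map d).sum with hfdef
  have hfeq : ∀ l : List A, f l = 0 ↔ d l.sum = (l.map d).sum := by
    intro l
    constructor
    · intro h'; exact sub_eq_zero.mp h'
    · intro h'; simp [hfdef, h']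
  have hnull : IsNullifying f r := by
    refine ⟨hr, ?_, ?_, ?_, ?_, ?_⟩
    · intro l l' hp
      simp only [hfdef]
      rw [hp.sum_eq, (hp.map d).sum_eq]
    · intro s t hs ht
      simp only [hfdef, List.map_append, List.sum_append, List.map_cons, List.map_nil,
        List.sum_cons, List.sum_nil, add_zero]
      constructor
      · intro heq
        have h2 := sub_right_inj.mp heq
        have h3 : d t.sum = (t.map d).sum := add_left_cancel h2
        rw [h3, sub_self]
      · intro hft
        have h3 : d t.sum = (t.map d).sum := sub_eq_zero.mp hft
        rw [h3]
    · intro x; simp [hfdef]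
    · intro s hs; simp [hfdef, hd0]
    · intro ts hts l
      have hd' := hd ts (by rw [hts])
      simp only [hfdef]
      have e1 : (l.map (Lmul ts)).sum = Lmul ts l.sum := (Lmul_sum ts l).symm
      have e2 : ((l.map (Lmul ts)).map d).sum
          = (∑ i ∈ Finset.range (n-1), Lmul (ts.set i (d (ts.getD i 0))) l.sum)
            + Lmul ts ((l.map d).sum) := by
        rw [List.map_map]
        have : (l.map (d ∘ Lmul ts)) = l.map (fun v =>
            (∑ i ∈ Finset.range (n-1), Lmul (ts.set i (d (ts.getD i 0))) v)
              + Lmul ts (d v)) := by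
          apply List.map_congr_left
          intro v _
          exact hd' v
        rw [this, list_sum_map_add, list_sum_map_finsum]
        congr 1
        · apply Finset.sum_congr rfl
          intro i _
          exact (Lmul_sum _ l).symm
        · rw [Lmul_sum, List.map_map]
          rfl
      rw [Lmul_sub, e1, hd' l.sum, e2]
      abel
  -- seed
  have hseed : (∀ p ∈ eigSet e α, f [e, p] = 0) → SeedProp e α r f := by
    intro hcross x hx y hy
    have hdadd : ∀ p, p ∈ eigSet e α → d (e + p) = d e + d p := by
      intro p hp
      have := (hfeq [e, p]).mp (hcross p hp)
      simpa using this
    obtain ⟨k, hk⟩ : ∃ k, r = k + 1 := ⟨r - 1, by omega⟩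
    have hk' : r - 1 = k := by omega
    have hexp : ∀ (w' : List A) (u z : A), Lmul (w' ++ [u]) z = Lmul w' (u * z) := by
      intro w' u z; rw [Lmul_append, Lmul_single]
    have hget_lt : ∀ (v : A) (i : ℕ), i < k →
        (List.replicate k e ++ [v]).getD i 0 = e := by
      intro v i hi
      rw [List.getD_append _ _ _ i (by simpa using hi),
        List.getD_eq_getElem _ _ (by simpa using hi), List.getElem_replicate]
    have hset_lt : ∀ (v u : A) (i : ℕ), i < k →
        (List.replicate k e ++ [v]).set i u = (List.replicate k e).set i u ++ [v] := by
      intro v u i hi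
      rw [List.set_append, if_pos (by simpa using hi)]
    have hget_last : ∀ v : A, (List.replicate k e ++ [v]).getD k 0 = v := by
      intro v
      rw [List.getD_append_right _ _ _ _ (by simp)]; simp
    have hset_last : ∀ v u : A,
        (List.replicate k e ++ [v]).set k u = List.replicate k e ++ [u] := by
      intro v u
      rw [List.set_append, if_neg (by simp)]; simp
    -- generic expansion of d on a product word
    have hdP : ∀ v w : A, d (Lmul (List.replicate k e) (v * w))
        = (∑ i ∈ Finset.range k, Lmul ((List.replicate k e).set i (d e) ++ [v]) w)
          + Lmul (List.replicate k e) (d v * w)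
          + Lmul (List.replicate k e) (v * d w) := by
      intro v w
      have h0 := hd (List.replicate k e ++ [v]) (by simp; omega) w
      rw [hexp] at h0
      rw [h0, hk, Finset.sum_range_succ, hget_last v, hset_last v (d v)]
      have hcong : (∑ i ∈ Finset.range k,
          Lmul ((List.replicate k e ++ [v]).set i
            (d ((List.replicate k e ++ [v]).getD i 0))) w)
          = ∑ i ∈ Finset.range k, Lmul ((List.replicate k e).set i (d e) ++ [v]) w := by
        apply Finset.sum_congr rfl
        intro i hi
        rw [hget_lt v i (Finset.mem_range.mp hi), hset_lt v (d e) i (Finset.mem_range.mp hi)]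
      rw [hcong, hexp (List.replicate k e) (d v) w, hexp (List.replicate k e) v (d w)]
    -- bilinear expansion of the chain words
    have hbil : ∀ w' : List A, Lmul w' ((e + x) * (e + y))
        = Lmul w' (e * e) + Lmul w' (e * y) + Lmul w' (x * e) + Lmul w' (x * y) := by
      intro w'
      rw [add_mul, mul_add, mul_add, Lmul_add, Lmul_add, Lmul_add]
      abel
    have hkey : d (Lmul (List.replicate k e) ((e + x) * (e + y)))
        = d (Lmul (List.replicate k e) (e * e)) + d (Lmul (List.replicate k e) (e * y))
          + d (Lmul (List.replicate k e) (x * e)) + d (Lmul (List.replicate k e) (x * y)) := by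
      rw [hdP (e + x) (e + y), hdP e e, hdP e y, hdP x e, hdP x y]
      have hsum1 : (∑ i ∈ Finset.range k, Lmul ((List.replicate k e).set i (d e) ++ [e + x]) (e + y))
          = (∑ i ∈ Finset.range k, Lmul ((List.replicate k e).set i (d e) ++ [e]) e)
            + (∑ i ∈ Finset.range k, Lmul ((List.replicate k e).set i (d e) ++ [e]) y)
            + (∑ i ∈ Finset.range k, Lmul ((List.replicate k e).set i (d e) ++ [x]) e)
            + (∑ i ∈ Finset.range k, Lmul ((List.replicate k e).set i (d e) ++ [x]) y) := by
        rw [← Finset.sum_add_distrib, ← Finset.sum_add_distrib, ← Finset.sum_add_distrib]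
        apply Finset.sum_congr rfl
        intro i _
        rw [hexp, hexp, hexp, hexp, hexp, hbil]
      have hmid : Lmul (List.replicate k e) (d (e + x) * (e + y))
          = Lmul (List.replicate k e) (d e * e) + Lmul (List.replicate k e) (d e * y)
            + Lmul (List.replicate k e) (d x * e) + Lmul (List.replicate k e) (d x * y) := by
        rw [hdadd x hx, add_mul, mul_add, mul_add, Lmul_add, Lmul_add, Lmul_add]
        abel
      have hlast : Lmul (List.replicate k e) ((e + x) * d (e + y))
          = Lmul (List.replicate k e) (e * d e) + Lmul (List.replicate k e) (e * d y)
            + Lmul (List.replicate k e) (x * d e) + Lmul (List.replicate k e) (x * d y) := by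
        rw [hdadd y hy, add_mul, mul_add, mul_add, Lmul_add, Lmul_add, Lmul_add]
        abel
      rw [hsum1, hmid, hlast]
      abel
    -- identify the four products
    have hPee : Lmul (List.replicate k e) (e * e) = e := by
      rw [h.idem, Epow_one h (e_mem h)]
    have hP2 : Lmul (List.replicate k e) (e * y) = (α ^ r) • y := by
      rw [show e * y = α • y from mem_eig.mp hy, Lmul_smul, Epow_alpha h hy, smul_smul,
        ← pow_succ', hk]
    have hP3 : Lmul (List.replicate k e) (x * e) = (α ^ r) • x := by
      rw [mul_comm, show e * x = α • x from mem_eig.mp hx, Lmul_smul, Epow_alpha h hx,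
        smul_smul, ← pow_succ', hk]
    have hSsum : Lmul (List.replicate k e) ((e + x) * (e + y))
        = e + ((α ^ r) • y + ((α ^ r) • x + Lmul (List.replicate k e) (x * y))) := by
      rw [hbil, hPee, hP2, hP3]
      abel
    -- conclude
    show f [e, (α ^ r) • y, (α ^ r) • x, Lmul (List.replicate (r - 1) e) (x * y)] = 0
    rw [hk']
    apply (hfeq _).mpr
    have hsum : List.sum [e, (α ^ r) • y, (α ^ r) • x, Lmul (List.replicate k e) (x * y)]
        = Lmul (List.replicate k e) ((e + x) * (e + y)) := by
      rw [hSsum]; simp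
    rw [hsum, hkey, hPee, hP2, hP3]
    simp only [List.map_cons, List.map_nil, List.sum_cons, List.sum_nil, add_zero]
    abel
  -- final
  intro x y
  have hv := main_vanish h hm hnull hseed x y
  have := (hfeq [x, y]).mp hv
  simpa using this

end Der
end JAddProof
/-- Corollary: on a `J(α)`-algebra satisfying the Martindale-like
conditions, every `n`-multiplicative isomorphism onto a commutative algebra `A'` is
additive, and every `n`-multiplicative derivation is additive. -/
theorem jalg_additivity {F A A' : Type*} [Field F] [NonUnitalNonAssocCommRing A]
    [Module F A] [SMulCommClass F A A] [IsScalarTower F A A]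
    [NonUnitalNonAssocCommRing A']
    (e : A) (α : F) (h : IsJAlg e α) (hm : MartindaleJ e α) (n : ℕ) (hn : 2 ≤ n) :
    (∀ φ : A → A', Function.Bijective φ →
      (∀ ts : List A, ts.length = n - 1 → ∀ x : A,
        φ (Lmul ts x) = Lmul (ts.map φ) (φ x)) →
      ∀ x y : A, φ (x + y) = φ x + φ y) ∧
    (∀ d : A → A,
      (∀ ts : List A, ts.length = n - 1 → ∀ x : A,
        d (Lmul ts x) =
          (∑ i ∈ Finset.range (n - 1), Lmul (ts.set i (d (ts.getD i 0))) x) +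
            Lmul ts (d x)) →
      ∀ x y : A, d (x + y) = d x + d y) := by
  constructor
  · intro φ hφ hmul x y
    exact JAddProof.phi_additive h hm hn φ hφ hmul x y
  · intro d hd x y
    exact JAddProof.d_additive h hm hn d hd x y
end

section
/- Let (A,e) be a J(α)-algebra (α ≠ 0,1) satisfying the Martindale-like conditions, let B be a commutative algebra, and let (M, M*) be a surjective elementary function from A to B (i.e., M : A → B and M* : B → A surjective with M(a(M*(x)b)) = M(a)(xM(b)) and M*(x(M(a)y)) = M*(x)(aM*(y)) for all a,b ∈ A, x,y ∈ B). Then M and M* are injective. -/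
/-- Separation lemma: an element annihilated by all double left multiplications is zero. -/
lemma jalg_sep {F A : Type*} [Field F] [NonUnitalNonAssocCommRing A]
    [Module F A] [SMulCommClass F A A] [IsScalarTower F A A]
    (e : A) (α : F) (h : IsJAlg e α) (hm : MartindaleJ e α)
    (d : A) (hd : ∀ u v : A, u * (v * d) = 0) : d = 0 := by
  obtain ⟨d1, hd1, d0, hd0, da, hda, rfl⟩ := h.decomp d
  have hd1' : e * d1 = d1 := by
    have := hd1; simp only [eigSet, Set.mem_setOf_eq, one_smul] at this; exact this
  have hd0' : e * d0 = 0 := by simpa [eigSet] using hd0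
  have hda' : e * da = α • da := hda
  have key1 : d1 + (α * α) • da = 0 := by
    have hh := hd e e
    simp only [mul_add, hd1', hd0', hda', mul_zero, add_zero, mul_smul_comm,
      smul_smul] at hh
    exact hh
  have key2 : d1 + (α * α * α) • da = 0 := by
    have hh := congrArg (e * ·) key1
    simpa [mul_add, hd1', mul_smul_comm, hda', smul_smul, mul_assoc] using hh
  have hda0 : da = 0 := by
    have h3 : (α * α * α - α * α) • da = 0 := by
      have hh := sub_eq_zero.mpr (key2.trans key1.symm)
      rw [add_sub_add_left_eq_sub] at hh
      rw [sub_smul]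
      exact hh
    have hne : (α * α * α - α * α) ≠ 0 := by
      have : α * α * α - α * α = α * α * (α - 1) := by ring
      rw [this]
      exact mul_ne_zero (mul_ne_zero h.hα0 h.hα0) (sub_ne_zero.mpr h.hα1)
    have hh := inv_smul_smul₀ hne da
    rw [h3, smul_zero] at hh
    exact hh.symm
  have hd1z : d1 = 0 := by simpa [hda0] using key1
  obtain ⟨_, _, hm3, _⟩ := hm
  have step1 : ∀ t ∈ eigSet e (0 : F), t * d0 = 0 := by
    intro t ht
    refine hm3 (t * d0) (h.f00 t ht d0 hd0) (fun t' _ => ?_)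
    have hh := hd t' t
    simpa [hd1z, hda0] using hh
  have hd0z : d0 = 0 := hm3 d0 hd0 step1
  simp [hd1z, hd0z, hda0]

/-- a surjective elementary function `(M, M*)` from a `J(α)`-algebra
satisfying the Martindale-like conditions to a commutative algebra `B` consists of
injective maps. -/
theorem jalg_elementary_injective {F A B : Type*} [Field F] [NonUnitalNonAssocCommRing A]
    [Module F A] [SMulCommClass F A A] [IsScalarTower F A A]
    [NonUnitalNonAssocCommRing B]
    (e : A) (α : F) (h : IsJAlg e α) (hm : MartindaleJ e α)
    (M : A → B) (Ms : B → A) (hM : Function.Surjective M) (hMs : Function.Surjective Ms)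
    (h1 : ∀ a b : A, ∀ x : B, M (a * (Ms x * b)) = M a * (x * M b))
    (h2 : ∀ x y : B, ∀ a : A, Ms (x * (M a * y)) = Ms x * (a * Ms y)) :
    Function.Injective M ∧ Function.Injective Ms := by
  have hM0 : M 0 = 0 := by simpa using h1 0 0 0
  have hMs0 : Ms 0 = 0 := by simpa using h2 0 0 0
  constructor
  · intro x y hxy
    have key : ∀ u v : A, u * (v * (x - y)) = 0 := by
      intro u v
      obtain ⟨p, hp⟩ := hMs u
      obtain ⟨q, hq⟩ := hMs v
      have e1 := h2 p q x
      have e2 := h2 p q y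
      rw [hxy] at e1
      have huv : u * (x * v) = u * (y * v) := by rw [← hp, ← hq, ← e1, ← e2]
      rw [mul_sub, mul_sub, mul_comm v x, mul_comm v y]
      exact sub_eq_zero.mpr huv
    have := jalg_sep e α h hm (x - y) key
    exact sub_eq_zero.mp this
  · intro x y hxy
    have hBkey : ∀ p q : B, p * (q * (x - y)) = 0 := by
      intro p q
      obtain ⟨a, ha⟩ := hM p
      obtain ⟨b, hb⟩ := hM q
      have e1 := h1 a b x
      have e2 := h1 a b y
      rw [hxy] at e1
      have hpq : p * (x * q) = p * (y * q) := by rw [← ha, ← hb, ← e1, ← e2]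
      rw [mul_sub, mul_sub, mul_comm q x, mul_comm q y]
      exact sub_eq_zero.mpr hpq
    obtain ⟨c, hc⟩ := hM (x - y)
    have hkeyA : ∀ u v : A, u * (v * c) = 0 := by
      intro u v
      obtain ⟨q, hq⟩ := hMs u
      obtain ⟨r, hr⟩ := hMs v
      have e := h2 q r c
      rw [hc] at e
      have hz : q * ((x - y) * r) = 0 := by rw [mul_comm (x - y) r]; exact hBkey q r
      rw [hz, hMs0] at e
      rw [← hq, ← hr, mul_comm (Ms r) c]
      exact e.symm
    have hc0 : c = 0 := jalg_sep e α h hm c hkeyA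
    rw [hc0, hM0] at hc
    exact sub_eq_zero.mp hc.symm
end

section
/- Let F be a field with char F ≠ 2,3,5, and A the 3-dimensional algebra with basis {e_A, e_B, e_C} and commutative multiplication e_Ae_A = e_A, e_Be_B = e_B, e_Ce_C = e_C, e_Ae_B = (1/8)(e_A + e_B − e_C), e_Ae_C = (1/8)(e_A − e_B + e_C), e_Be_C = (1/8)(−e_A + e_B + e_C). Then (A, e_A) is a J(1/4)-algebra with A₁ = Fe_A, A₀ = F(−e_A + 4e_B + 4e_C), and A_{1/4} = F(e_B − e_C), i.e., A is the direct sum of these eigenspaces of L_{e_A} and the fusion law J(1/4) holds. -/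
/-- Basis vectors of the Norton–Sakuma algebra of type 2A. -/
def eA (F : Type*) [Field F] : Fin 3 → F := ![1, 0, 0]
def eB (F : Type*) [Field F] : Fin 3 → F := ![0, 1, 0]
def eC (F : Type*) [Field F] : Fin 3 → F := ![0, 0, 1]

/-- The commutative bilinear multiplication of the Norton–Sakuma algebra of type 2A:
`e_X² = e_X` and `e_X e_Y = (1/8)(e_X + e_Y − e_Z)` for `{X, Y, Z} = {A, B, C}`. -/
def nsMul {F : Type*} [Field F] (x y : Fin 3 → F) : Fin 3 → F :=
  (x 0 * y 0) • eA F + (x 1 * y 1) • eB F + (x 2 * y 2) • eC F +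
    ((x 0 * y 1 + x 1 * y 0) * (8 : F)⁻¹) • (eA F + eB F - eC F) +
    ((x 0 * y 2 + x 2 * y 0) * (8 : F)⁻¹) • (eA F - eB F + eC F) +
    ((x 1 * y 2 + x 2 * y 1) * (8 : F)⁻¹) • (-eA F + eB F + eC F)

/-- The `lam`-eigenspace of left multiplication by the axis `e_A`. -/
def nsEig (F : Type*) [Field F] (lam : F) : Set (Fin 3 → F) :=
  {x | nsMul (eA F) x = lam • x}

/-- `nsMul` written out coordinatewise. -/
lemma nsMul_eq {F : Type*} [Field F] (x y : Fin 3 → F) : nsMul x y =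
    ![x 0 * y 0 + (x 0 * y 1 + x 1 * y 0) * 8⁻¹ + (x 0 * y 2 + x 2 * y 0) * 8⁻¹
        - (x 1 * y 2 + x 2 * y 1) * 8⁻¹,
      x 1 * y 1 + (x 0 * y 1 + x 1 * y 0) * 8⁻¹ - (x 0 * y 2 + x 2 * y 0) * 8⁻¹
        + (x 1 * y 2 + x 2 * y 1) * 8⁻¹,
      x 2 * y 2 - (x 0 * y 1 + x 1 * y 0) * 8⁻¹ + (x 0 * y 2 + x 2 * y 0) * 8⁻¹
        + (x 1 * y 2 + x 2 * y 1) * 8⁻¹] := by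
  funext i
  fin_cases i <;> simp [nsMul, eA, eB, eC] <;> ring

/-- Membership in an eigenspace, written out as three scalar equations. -/
lemma mem_nsEig {F : Type*} [Field F] {lam : F} {x : Fin 3 → F} : x ∈ nsEig F lam ↔
    (x 0 + x 1 * 8⁻¹ + x 2 * 8⁻¹ = lam * x 0 ∧
     x 1 * 8⁻¹ - x 2 * 8⁻¹ = lam * x 1 ∧
     x 2 * 8⁻¹ - x 1 * 8⁻¹ = lam * x 2) := by
  constructor
  · intro h
    refine ⟨?_, ?_, ?_⟩
    · have := congrFun h 0; simp [nsMul, eA, eB, eC] at this; linear_combination this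
    · have := congrFun h 1; simp [nsMul, eA, eB, eC] at this; linear_combination this
    · have := congrFun h 2; simp [nsMul, eA, eB, eC] at this; linear_combination this
  · rintro ⟨a, b, c⟩
    funext i
    fin_cases i <;> simp [nsMul, eA, eB, eC] <;>
      [linear_combination a; linear_combination b; linear_combination c]

set_option maxHeartbeats 1000000 in
/-- over a field with `char F ≠ 2, 3, 5`, the Norton–Sakuma algebra of
type 2A with axis `e_A` is a `J(1/4)`-algebra with `A₁ = Fe_A`,
`A₀ = F(−e_A + 4e_B + 4e_C)` and `A_{1/4} = F(e_B − e_C)`. -/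
theorem nortonSakuma_JAlg (F : Type*) [Field F]
    (h2 : (2 : F) ≠ 0) (h3 : (3 : F) ≠ 0) (h5 : (5 : F) ≠ 0) :
    nsMul (eA F) (eA F) = eA F ∧
    nsEig F 1 = {x | ∃ c : F, x = c • eA F} ∧
    nsEig F 0 = {x | ∃ c : F, x = c • (-eA F + (4 : F) • eB F + (4 : F) • eC F)} ∧
    nsEig F ((4 : F)⁻¹) = {x | ∃ c : F, x = c • (eB F - eC F)} ∧
    (∀ x : Fin 3 → F, ∃ x1 ∈ nsEig F 1, ∃ x0 ∈ nsEig F 0, ∃ xq ∈ nsEig F ((4 : F)⁻¹),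
      x = x1 + x0 + xq) ∧
    (∀ x ∈ nsEig F 1, ∀ y ∈ nsEig F 1, nsMul x y ∈ nsEig F 1) ∧
    (∀ x ∈ nsEig F 1, ∀ y ∈ nsEig F 0, nsMul x y = 0) ∧
    (∀ x ∈ nsEig F 1, ∀ y ∈ nsEig F ((4 : F)⁻¹), nsMul x y ∈ nsEig F ((4 : F)⁻¹)) ∧
    (∀ x ∈ nsEig F 0, ∀ y ∈ nsEig F 0, nsMul x y ∈ nsEig F 0) ∧
    (∀ x ∈ nsEig F 0, ∀ y ∈ nsEig F ((4 : F)⁻¹), nsMul x y ∈ nsEig F ((4 : F)⁻¹)) ∧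
    (∀ x ∈ nsEig F ((4 : F)⁻¹), ∀ y ∈ nsEig F ((4 : F)⁻¹),
      ∃ z1 ∈ nsEig F 1, ∃ z0 ∈ nsEig F 0, nsMul x y = z1 + z0) := by
  have h8 : (8 : F) ≠ 0 := by
    have : (8 : F) = 2 * 2 * 2 := by norm_num
    rw [this]; exact mul_ne_zero (mul_ne_zero h2 h2) h2
  have h4 : (4 : F) ≠ 0 := by
    have : (4 : F) = 2 * 2 := by norm_num
    rw [this]; exact mul_ne_zero h2 h2
  have h16 : (16 : F) ≠ 0 := by
    have : (16 : F) = 2 * 8 := by norm_num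
    rw [this]; exact mul_ne_zero h2 h8
  have he1 : nsEig F 1 = {x | ∃ c : F, x = c • eA F} := by
    ext x
    simp only [Set.mem_setOf_eq, mem_nsEig]
    constructor
    · rintro ⟨a, b, c⟩
      field_simp at a b c
      have h6 : (6 : F) ≠ 0 := by
        have : (6 : F) = 2 * 3 := by norm_num
        rw [this]; exact mul_ne_zero h2 h3
      have hx1 : x 1 = 0 := by
        have h : (6 : F) * x 1 = 0 := by linear_combination -a - b
        exact (mul_eq_zero.mp h).resolve_left h6
      have hx2 : x 2 = 0 := by linear_combination a - hx1
      exact ⟨x 0, by funext i; fin_cases i <;> simp [eA, hx1, hx2]⟩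
    · rintro ⟨c, rfl⟩
      refine ⟨?_, ?_, ?_⟩ <;> simp [eA]
  have he0 : nsEig F 0 =
      {x | ∃ c : F, x = c • (-eA F + (4 : F) • eB F + (4 : F) • eC F)} := by
    ext x
    simp only [Set.mem_setOf_eq, mem_nsEig]
    constructor
    · rintro ⟨a, b, c⟩
      field_simp at a b c
      have hb : x 2 = x 1 := by linear_combination -b
      refine ⟨x 1 / 4, ?_⟩
      funext i
      fin_cases i
      all_goals simp [eA, eB, eC]
      all_goals field_simp
      · have h : (2 : F) * (x 0 * 4 + x 1) = 0 := by linear_combination a - hb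
        exact eq_neg_of_add_eq_zero_left ((mul_eq_zero.mp h).resolve_left h2)
      · exact hb
    · rintro ⟨c, rfl⟩
      refine ⟨?_, ?_, ?_⟩ <;> simp [eA, eB, eC] <;> field_simp <;> ring
  have heq : nsEig F ((4 : F)⁻¹) = {x | ∃ c : F, x = c • (eB F - eC F)} := by
    ext x
    simp only [Set.mem_setOf_eq, mem_nsEig]
    constructor
    · rintro ⟨a, b, c⟩
      field_simp at a b c
      have hx2 : x 2 = -x 1 := by
        have h : (4 : F) * (x 2 + x 1) = 0 := by linear_combination -b
        have := (mul_eq_zero.mp h).resolve_left h4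
        linear_combination this
      have hx0 : x 0 = 0 := by
        have h24 : (24 : F) ≠ 0 := by
          have : (24 : F) = 2 * 2 * 2 * 3 := by norm_num
          rw [this]; exact mul_ne_zero (mul_ne_zero (mul_ne_zero h2 h2) h2) h3
        have h : (24 : F) * x 0 = 0 := by linear_combination a - 4 * hx2
        exact (mul_eq_zero.mp h).resolve_left h24
      refine ⟨x 1, ?_⟩
      funext i
      fin_cases i <;> simp [eA, eB, eC, hx0, hx2]
    · rintro ⟨c, rfl⟩
      refine ⟨?_, ?_, ?_⟩ <;> simp [eA, eB, eC] <;> field_simp <;> ring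
  refine ⟨?_, he1, he0, heq, ?_, ?_, ?_, ?_, ?_, ?_, ?_⟩
  · funext i; fin_cases i <;> simp [nsMul, eA, eB, eC]
  · -- decomposition into eigenvectors
    intro x
    refine ⟨(x 0 + (x 1 + x 2) / 8) • eA F, by rw [he1]; exact ⟨_, rfl⟩,
      ((x 1 + x 2) / 8) • (-eA F + (4 : F) • eB F + (4 : F) • eC F),
      by rw [he0]; exact ⟨_, rfl⟩,
      ((x 1 - x 2) / 2) • (eB F - eC F), by rw [heq]; exact ⟨_, rfl⟩, ?_⟩
    funext i
    fin_cases i <;> simp [eA, eB, eC] <;> field_simp <;> ring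
  · rintro x hx y hy
    rw [he1] at hx hy ⊢
    obtain ⟨c, rfl⟩ := hx; obtain ⟨d, rfl⟩ := hy
    exact ⟨c * d, by funext i; fin_cases i <;> simp [nsMul, eA, eB, eC]⟩
  · rintro x hx y hy
    rw [he1] at hx; rw [he0] at hy
    obtain ⟨c, rfl⟩ := hx; obtain ⟨d, rfl⟩ := hy
    funext i
    fin_cases i <;> simp [nsMul, eA, eB, eC] <;> field_simp <;> ring
  · rintro x hx y hy
    rw [he1] at hx; rw [heq] at hy ⊢
    obtain ⟨c, rfl⟩ := hx; obtain ⟨d, rfl⟩ := hy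
    refine ⟨c * d / 4, ?_⟩
    funext i
    fin_cases i <;> simp [nsMul, eA, eB, eC] <;> field_simp <;> ring
  · rintro x hx y hy
    rw [he0] at hx hy ⊢
    obtain ⟨c, rfl⟩ := hx; obtain ⟨d, rfl⟩ := hy
    refine ⟨5 * (c * d), ?_⟩
    funext i
    fin_cases i <;> simp [nsMul, eA, eB, eC] <;> field_simp <;> ring
  · rintro x hx y hy
    rw [he0] at hx; rw [heq] at hy ⊢
    obtain ⟨c, rfl⟩ := hx; obtain ⟨d, rfl⟩ := hy
    refine ⟨15 * (c * d) / 4, ?_⟩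
    funext i
    fin_cases i <;> simp [nsMul, eA, eB, eC] <;> field_simp <;> ring
  · rintro x hx y hy
    rw [heq] at hx hy
    obtain ⟨c, rfl⟩ := hx; obtain ⟨d, rfl⟩ := hy
    refine ⟨(7 * (c * d) / 16) • eA F, by rw [he1]; exact ⟨_, rfl⟩,
      (3 * (c * d) / 16) • (-eA F + (4 : F) • eB F + (4 : F) • eC F),
      by rw [he0]; exact ⟨_, rfl⟩, ?_⟩
    rw [nsMul_eq]
    funext i
    fin_cases i <;> simp [eA, eB, eC] <;> field_simp <;> ring
end

section
/- Let (A,e) be an M(α,β)-algebra (α, β, 1, 0 pairwise distinct) satisfying the Martindale-like conditions (i)–(v). Fix r ≥ 1 and define the operator sets L₀ (products L_{t₁}···L_{t_r}, tᵢ ∈ A₀), L₁ = {L_e^r}, L_α = {L_e^{r−1}L_t : t ∈ A_α}, L_β = {L_e^{r−1}L_t : t ∈ A_β}, and G = L₀L₁, F_β = G L_α G, F_α = F_β L_β G, F₁ = F_α L_α L₁, F₀ = F_α L_α L₀. Then for i ≠ j in {1,0,α,β}, F_i A_j = 0, and for a_i ∈ A_i, F_i a_i = 0 implies a_i = 0.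 -/
/-- `(A, e)` is an `M(α,β)`-algebra: `e` idempotent, `1, 0, α, β` pairwise distinct,
`A` decomposes as the sum of the `1`-, `0`-, `α`- and `β`-eigenspaces of `L_e`, and the
Monster-type fusion law holds. -/
structure IsMAlg {F A : Type*} [Field F] [NonUnitalNonAssocCommRing A] [Module F A]
    (e : A) (α β : F) : Prop where
  idem : e * e = e
  hα0 : α ≠ 0
  hα1 : α ≠ 1
  hβ0 : β ≠ 0
  hβ1 : β ≠ 1
  hαβ : α ≠ β
  decomp : ∀ x : A, ∃ x1 ∈ eigSet e (1 : F), ∃ x0 ∈ eigSet e (0 : F), ∃ xa ∈ eigSet e α,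
    ∃ xb ∈ eigSet e β, x = x1 + x0 + xa + xb
  f11 : ∀ x ∈ eigSet e (1 : F), ∀ y ∈ eigSet e (1 : F), x * y ∈ eigSet e (1 : F)
  f10 : ∀ x ∈ eigSet e (1 : F), ∀ y ∈ eigSet e (0 : F), x * y = 0
  f1a : ∀ x ∈ eigSet e (1 : F), ∀ y ∈ eigSet e α, x * y ∈ eigSet e α
  f1b : ∀ x ∈ eigSet e (1 : F), ∀ y ∈ eigSet e β, x * y ∈ eigSet e β
  f00 : ∀ x ∈ eigSet e (0 : F), ∀ y ∈ eigSet e (0 : F), x * y ∈ eigSet e (0 : F)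
  f0a : ∀ x ∈ eigSet e (0 : F), ∀ y ∈ eigSet e α, x * y ∈ eigSet e α
  f0b : ∀ x ∈ eigSet e (0 : F), ∀ y ∈ eigSet e β, x * y ∈ eigSet e β
  faa : ∀ x ∈ eigSet e α, ∀ y ∈ eigSet e α, ∃ z1 ∈ eigSet e (1 : F), ∃ z0 ∈ eigSet e (0 : F),
    x * y = z1 + z0
  fab : ∀ x ∈ eigSet e α, ∀ y ∈ eigSet e β, x * y ∈ eigSet e β
  fbb : ∀ x ∈ eigSet e β, ∀ y ∈ eigSet e β, ∃ z1 ∈ eigSet e (1 : F), ∃ z0 ∈ eigSet e (0 : F),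
    ∃ za ∈ eigSet e α, x * y = z1 + z0 + za

/-- Martindale-like conditions (i)–(v) for an `M(α,β)`-algebra. -/
def MartindaleM {F A : Type*} [Field F] [NonUnitalNonAssocCommRing A] [Module F A]
    (e : A) (α β : F) : Prop :=
  (∀ a ∈ eigSet e (1 : F), (∀ t ∈ eigSet e α, t * a = 0) → a = 0) ∧
  (∀ a ∈ eigSet e (0 : F), (∀ t ∈ eigSet e α, t * a = 0) → a = 0) ∧
  (∀ a ∈ eigSet e (0 : F), (∀ t ∈ eigSet e (0 : F), t * a = 0) → a = 0) ∧
  (∀ a ∈ eigSet e α, (∀ t ∈ eigSet e (0 : F), t * a = 0) → a = 0) ∧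
  (∀ a ∈ eigSet e β, (∀ t ∈ eigSet e (0 : F), t * a = 0) → a = 0) ∧
  (∀ a ∈ eigSet e β, (∀ t ∈ eigSet e α, t * a = 0) → a = 0) ∧
  (∀ a ∈ eigSet e α, (∀ t ∈ eigSet e β, t * a = 0) → a = 0)

/-- Composition of two sets of operators: apply an element of `T` first, then `S`. -/
def setComp {A : Type*} (S T : Set (A → A)) : Set (A → A) :=
  {h | ∃ g ∈ S, ∃ f ∈ T, h = g ∘ f}

/-- `𝓛₀`: operators `L_{t₁} ⋯ L_{t_r}` with all `tᵢ ∈ A₀`. -/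
def L0set {F A : Type*} [Field F] [NonUnitalNonAssocCommRing A] [Module F A]
    (e : A) (r : ℕ) : Set (A → A) :=
  {L | ∃ ts : List A, ts.length = r ∧ (∀ t ∈ ts, t ∈ eigSet e (0 : F)) ∧ L = Lmul ts}

/-- `𝓛₁ = {L_e^r}`. -/
def L1set {A : Type*} [Mul A] (e : A) (r : ℕ) : Set (A → A) :=
  {Lmul (List.replicate r e)}

/-- `𝓛_λ`: operators `L_e^{r-1} L_t` with `t ∈ A_λ`. -/
def Llamset {F A : Type*} [Field F] [NonUnitalNonAssocCommRing A] [Module F A]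
    (e : A) (lam : F) (r : ℕ) : Set (A → A) :=
  {L | ∃ t ∈ eigSet e lam, L = Lmul (List.replicate (r - 1) e ++ [t])}

/-- `𝓖 = 𝓛₀𝓛₁`. -/
def GM {F A : Type*} [Field F] [NonUnitalNonAssocCommRing A] [Module F A]
    (e : A) (r : ℕ) : Set (A → A) :=
  setComp (L0set (F := F) e r) (L1set e r)

/-- `𝓕_β = 𝓖𝓛_α𝓖`. -/
def FbM {F A : Type*} [Field F] [NonUnitalNonAssocCommRing A] [Module F A]
    (e : A) (α : F) (r : ℕ) : Set (A → A) :=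
  setComp (setComp (GM (F := F) e r) (Llamset e α r)) (GM (F := F) e r)

/-- `𝓕_α = 𝓕_β𝓛_β𝓖`. -/
def FaM {F A : Type*} [Field F] [NonUnitalNonAssocCommRing A] [Module F A]
    (e : A) (α β : F) (r : ℕ) : Set (A → A) :=
  setComp (setComp (FbM e α r) (Llamset e β r)) (GM (F := F) e r)

/-- `𝓕₁ = 𝓕_α𝓛_α𝓛₁`. -/
def F1M {F A : Type*} [Field F] [NonUnitalNonAssocCommRing A] [Module F A]
    (e : A) (α β : F) (r : ℕ) : Set (A → A) :=
  setComp (setComp (FaM e α β r) (Llamset e α r)) (L1set e r)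

/-- `𝓕₀ = 𝓕_α𝓛_α𝓛₀`. -/
def F0M {F A : Type*} [Field F] [NonUnitalNonAssocCommRing A] [Module F A]
    (e : A) (α β : F) (r : ℕ) : Set (A → A) :=
  setComp (setComp (FaM e α β r) (Llamset e α r)) (L0set (F := F) e r)

set_option linter.unusedSectionVars false

section MAlgAux

variable {F A : Type*} [Field F] [NonUnitalNonAssocCommRing A] [Module F A]
  [SMulCommClass F A A] [IsScalarTower F A A]

lemma lmul_nil (x : A) : Lmul [] x = x := rfl
lemma lmul_cons (t : A) (ts : List A) (x : A) : Lmul (t :: ts) x = t * Lmul ts x := rfl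
lemma lmul_singleton (t x : A) : Lmul [t] x = t * x := rfl

lemma lmul_append (l1 l2 : List A) (x : A) : Lmul (l1 ++ l2) x = Lmul l1 (Lmul l2 x) := by
  induction l1 with
  | nil => rfl
  | cons t ts ih => simp [lmul_cons, ih]

lemma lmul_zero (ts : List A) : Lmul ts (0 : A) = 0 := by
  induction ts with
  | nil => rfl
  | cons t ts ih => simp [lmul_cons, ih]

lemma lmul_add (ts : List A) (x y : A) : Lmul ts (x + y) = Lmul ts x + Lmul ts y := by
  induction ts with
  | nil => rfl
  | cons t ts ih => simp [lmul_cons, ih, mul_add]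

lemma lmul_smul (ts : List A) (c : F) (x : A) : Lmul ts (c • x) = c • Lmul ts x := by
  induction ts with
  | nil => rfl
  | cons t ts ih => simp [lmul_cons, ih, mul_smul_comm]

/-- A map is a composite of left multiplications. -/
def IsLm {A : Type*} [Mul A] (L : A → A) : Prop := ∃ ls : List A, L = Lmul ls

lemma IsLm.map_zero' {L : A → A} (hL : IsLm L) : L 0 = 0 := by
  obtain ⟨l, rfl⟩ := hL; exact lmul_zero l
lemma IsLm.map_add' {L : A → A} (hL : IsLm L) (x y : A) : L (x + y) = L x + L y := by
  obtain ⟨l, rfl⟩ := hL; exact lmul_add l x y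
lemma IsLm.map_smul' {L : A → A} (hL : IsLm L) (c : F) (x : A) : L (c • x) = c • L x := by
  obtain ⟨l, rfl⟩ := hL; exact lmul_smul l c x

lemma isLm_setComp {S T : Set (A → A)} (hS : ∀ L ∈ S, IsLm L) (hT : ∀ L ∈ T, IsLm L) :
    ∀ L ∈ setComp S T, IsLm L := by
  rintro L ⟨g, hg, f, hf, rfl⟩
  obtain ⟨l1, rfl⟩ := hS g hg; obtain ⟨l2, rfl⟩ := hT f hf
  exact ⟨l1 ++ l2, funext fun x => (lmul_append l1 l2 x).symm⟩

lemma isLm_L0 {e : A} {r : ℕ} : ∀ L ∈ L0set (F := F) e r, IsLm L := by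
  rintro L ⟨ts, -, -, rfl⟩; exact ⟨ts, rfl⟩
lemma isLm_L1 {e : A} {r : ℕ} : ∀ L ∈ L1set e r, IsLm L := by
  rintro L hL; exact ⟨_, hL⟩
lemma isLm_Llam {e : A} {lam : F} {r : ℕ} : ∀ L ∈ Llamset e lam r, IsLm L := by
  rintro L ⟨t, -, rfl⟩; exact ⟨_, rfl⟩
lemma isLm_gm {e : A} {r : ℕ} : ∀ L ∈ GM (F := F) e r, IsLm L :=
  isLm_setComp isLm_L0 isLm_L1
lemma isLm_fb {e : A} {α : F} {r : ℕ} : ∀ L ∈ FbM e α r, IsLm L :=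
  isLm_setComp (isLm_setComp isLm_gm isLm_Llam) isLm_gm
lemma isLm_fa {e : A} {α β : F} {r : ℕ} : ∀ L ∈ FaM e α β r, IsLm L :=
  isLm_setComp (isLm_setComp isLm_fb isLm_Llam) isLm_gm

lemma smul_cancel {c : F} (hc : c ≠ 0) {x : A} (hx : c • x = 0) : x = 0 := by
  have h2 := congrArg (c⁻¹ • ·) hx
  simpa [smul_smul, inv_mul_cancel₀ hc] using h2

lemma lmul_rep {e : A} {lam : F} {k : ℕ} {a : A} (ha : a ∈ eigSet e lam) :
    Lmul (List.replicate k e) a = lam ^ k • a := by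
  induction k with
  | zero => simp [lmul_nil]
  | succ k ih =>
    have ha' : e * a = lam • a := ha
    rw [List.replicate_succ, lmul_cons, ih, mul_smul_comm, ha', smul_smul, ← pow_succ]

lemma lmul0_mem {e : A} {lam : F}
    (hcl : ∀ t ∈ eigSet e (0 : F), ∀ a ∈ eigSet e lam, t * a ∈ eigSet e lam)
    {ts : List A} (hts : ∀ t ∈ ts, t ∈ eigSet e (0 : F)) {a : A} (ha : a ∈ eigSet e lam) :
    Lmul ts a ∈ eigSet e lam := by
  induction ts with
  | nil => exact ha
  | cons t ts ih =>
    exact hcl t (hts t (by simp)) _ (ih (fun s hs => hts s (by simp [hs])))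

lemma lmul0_one {e : A} {α β : F} (h : IsMAlg e α β) {ts : List A}
    (hts : ∀ t ∈ ts, t ∈ eigSet e (0 : F)) (hne : ts ≠ []) {a : A}
    (ha : a ∈ eigSet e (1 : F)) : Lmul ts a = 0 := by
  induction ts with
  | nil => exact absurd rfl hne
  | cons t ts ih =>
    rcases ts with _ | ⟨s, ts⟩
    · rw [lmul_singleton, mul_comm]
      exact h.f10 a ha t (hts t (by simp))
    · rw [lmul_cons, ih (fun u hu => hts u (by simp [hu])) (by simp), mul_zero]

/-- Nested separation: if all `r`-fold products of `A₀`-multiplications kill `a`, then `a = 0`. -/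
lemma nested {e : A} {lam : F}
    (hcl : ∀ t ∈ eigSet e (0 : F), ∀ a ∈ eigSet e lam, t * a ∈ eigSet e lam)
    (hM : ∀ a ∈ eigSet e lam, (∀ t ∈ eigSet e (0 : F), t * a = 0) → a = 0)
    (n : ℕ) :
    ∀ a ∈ eigSet e lam, (∀ ts : List A, ts.length = n →
      (∀ t ∈ ts, t ∈ eigSet e (0 : F)) → Lmul ts a = 0) → a = 0 := by
  induction n with
  | zero => intro a _ hz; simpa [lmul_nil] using hz [] rfl (by simp)
  | succ n ih =>
    intro a ha hz
    refine hM a ha fun t ht => ih (t * a) (hcl t ht a ha) ?_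
    intro ts hlen hmem
    have hz' := hz (ts ++ [t]) (by simp [hlen]) (by
      intro s hs
      rcases List.mem_append.mp hs with h' | h'
      · exact hmem s h'
      · rw [List.mem_singleton] at h'; subst h'; exact ht)
    rw [lmul_append, lmul_singleton] at hz'
    exact hz'

section Ops

variable {e : A} {α β : F} {r : ℕ}

lemma gm_intro {ts : List A} (h1 : ts.length = r) (h2 : ∀ t ∈ ts, t ∈ eigSet e (0 : F)) :
    (fun x => Lmul ts (Lmul (List.replicate r e) x)) ∈ GM (F := F) e r :=
  ⟨Lmul ts, ⟨ts, h1, h2, rfl⟩, Lmul (List.replicate r e), rfl, rfl⟩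

lemma gm_elim {L : A → A} (hL : L ∈ GM (F := F) e r) :
    ∃ ts : List A, ts.length = r ∧ (∀ t ∈ ts, t ∈ eigSet e (0 : F)) ∧
      ∀ x, L x = Lmul ts (Lmul (List.replicate r e) x) := by
  obtain ⟨g, ⟨ts, h1, h2, rfl⟩, f, hf, rfl⟩ := hL
  obtain rfl : f = Lmul (List.replicate r e) := hf
  exact ⟨ts, h1, h2, fun x => rfl⟩

lemma fb_intro {g2 g1 : A → A} (hg2 : g2 ∈ GM (F := F) e r) (hg1 : g1 ∈ GM (F := F) e r)
    {t : A} (ht : t ∈ eigSet e α) :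
    (fun x => g2 (Lmul (List.replicate (r - 1) e) (t * g1 x))) ∈ FbM e α r := by
  refine ⟨g2 ∘ Lmul (List.replicate (r - 1) e ++ [t]), ⟨g2, hg2, _, ⟨t, ht, rfl⟩, rfl⟩,
    g1, hg1, ?_⟩
  funext x
  simp [Function.comp, lmul_append, lmul_singleton]

lemma fb_elim {L : A → A} (hL : L ∈ FbM e α r) :
    ∃ g2 ∈ GM (F := F) e r, ∃ t ∈ eigSet e α, ∃ g1 ∈ GM (F := F) e r,
      ∀ x, L x = g2 (Lmul (List.replicate (r - 1) e) (t * g1 x)) := by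
  obtain ⟨gq, ⟨g2, hg2, q, ⟨t, ht, rfl⟩, rfl⟩, g1, hg1, rfl⟩ := hL
  refine ⟨g2, hg2, t, ht, g1, hg1, fun x => ?_⟩
  show g2 (Lmul (List.replicate (r - 1) e ++ [t]) (g1 x)) = _
  rw [lmul_append, lmul_singleton]

lemma fa_intro {P g1 : A → A} (hP : P ∈ FbM e α r) (hg1 : g1 ∈ GM (F := F) e r)
    {t : A} (ht : t ∈ eigSet e β) :
    (fun x => P (Lmul (List.replicate (r - 1) e) (t * g1 x))) ∈ FaM e α β r := by
  refine ⟨P ∘ Lmul (List.replicate (r - 1) e ++ [t]), ⟨P, hP, _, ⟨t, ht, rfl⟩, rfl⟩,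
    g1, hg1, ?_⟩
  funext x
  simp [Function.comp, lmul_append, lmul_singleton]

lemma fa_elim {L : A → A} (hL : L ∈ FaM e α β r) :
    ∃ P ∈ FbM e α r, ∃ t ∈ eigSet e β, ∃ g1 ∈ GM (F := F) e r,
      ∀ x, L x = P (Lmul (List.replicate (r - 1) e) (t * g1 x)) := by
  obtain ⟨gq, ⟨P, hP, q, ⟨t, ht, rfl⟩, rfl⟩, g1, hg1, rfl⟩ := hL
  refine ⟨P, hP, t, ht, g1, hg1, fun x => ?_⟩
  show P (Lmul (List.replicate (r - 1) e ++ [t]) (g1 x)) = _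
  rw [lmul_append, lmul_singleton]

lemma f1_intro {P : A → A} (hP : P ∈ FaM e α β r) {t : A} (ht : t ∈ eigSet e α) :
    (fun x => P (Lmul (List.replicate (r - 1) e) (t * Lmul (List.replicate r e) x)))
      ∈ F1M e α β r := by
  refine ⟨P ∘ Lmul (List.replicate (r - 1) e ++ [t]), ⟨P, hP, _, ⟨t, ht, rfl⟩, rfl⟩,
    Lmul (List.replicate r e), rfl, ?_⟩
  funext x
  simp [Function.comp, lmul_append, lmul_singleton]

lemma f1_elim {L : A → A} (hL : L ∈ F1M e α β r) :
    ∃ P ∈ FaM e α β r, ∃ t ∈ eigSet e α,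
      ∀ x, L x = P (Lmul (List.replicate (r - 1) e) (t * Lmul (List.replicate r e) x)) := by
  obtain ⟨gq, ⟨P, hP, q, ⟨t, ht, rfl⟩, rfl⟩, f, hf, rfl⟩ := hL
  obtain rfl : f = Lmul (List.replicate r e) := hf
  refine ⟨P, hP, t, ht, fun x => ?_⟩
  show P (Lmul (List.replicate (r - 1) e ++ [t]) (Lmul (List.replicate r e) x)) = _
  rw [lmul_append, lmul_singleton]

lemma f0_intro {P : A → A} (hP : P ∈ FaM e α β r) {t : A} (ht : t ∈ eigSet e α)
    {ts : List A} (h1 : ts.length = r) (h2 : ∀ s ∈ ts, s ∈ eigSet e (0 : F)) :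
    (fun x => P (Lmul (List.replicate (r - 1) e) (t * Lmul ts x))) ∈ F0M e α β r := by
  refine ⟨P ∘ Lmul (List.replicate (r - 1) e ++ [t]), ⟨P, hP, _, ⟨t, ht, rfl⟩, rfl⟩,
    Lmul ts, ⟨ts, h1, h2, rfl⟩, ?_⟩
  funext x
  simp [Function.comp, lmul_append, lmul_singleton]

lemma f0_elim {L : A → A} (hL : L ∈ F0M e α β r) :
    ∃ P ∈ FaM e α β r, ∃ t ∈ eigSet e α, ∃ ts : List A, ts.length = r ∧
      (∀ s ∈ ts, s ∈ eigSet e (0 : F)) ∧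
      ∀ x, L x = P (Lmul (List.replicate (r - 1) e) (t * Lmul ts x)) := by
  obtain ⟨gq, ⟨P, hP, q, ⟨t, ht, rfl⟩, rfl⟩, f, ⟨ts, h1, h2, rfl⟩, rfl⟩ := hL
  refine ⟨P, hP, t, ht, ts, h1, h2, fun x => ?_⟩
  show P (Lmul (List.replicate (r - 1) e ++ [t]) (Lmul ts x)) = _
  rw [lmul_append, lmul_singleton]

end Ops

section Kill

variable {e : A} {α β : F} {r : ℕ}

lemma gm_one (h : IsMAlg e α β) (hr : 1 ≤ r) {L : A → A} (hL : L ∈ GM (F := F) e r)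
    {a : A} (ha : a ∈ eigSet e (1 : F)) : L a = 0 := by
  obtain ⟨ts, hlen, hmem, hx⟩ := gm_elim hL
  rw [hx, lmul_rep ha, one_pow, one_smul]
  exact lmul0_one h hmem (by rintro rfl; simp at hlen; omega) ha

lemma gm_zero (hr : 1 ≤ r) {L : A → A} (hL : L ∈ GM (F := F) e r)
    {a : A} (ha : a ∈ eigSet e (0 : F)) : L a = 0 := by
  obtain ⟨ts, hlen, hmem, hx⟩ := gm_elim hL
  rw [hx, lmul_rep ha, zero_pow (by omega : r ≠ 0), zero_smul, lmul_zero]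

lemma fb_one (h : IsMAlg e α β) (hr : 1 ≤ r) {L : A → A} (hL : L ∈ FbM e α r)
    {a : A} (ha : a ∈ eigSet e (1 : F)) : L a = 0 := by
  obtain ⟨g2, hg2, t, ht, g1, hg1, hx⟩ := fb_elim hL
  rw [hx, gm_one h hr hg1 ha, mul_zero, lmul_zero, (isLm_gm g2 hg2).map_zero']

lemma fb_zero (h : IsMAlg e α β) (hr : 1 ≤ r) {L : A → A} (hL : L ∈ FbM e α r)
    {a : A} (ha : a ∈ eigSet e (0 : F)) : L a = 0 := by
  obtain ⟨g2, hg2, t, ht, g1, hg1, hx⟩ := fb_elim hL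
  rw [hx, gm_zero hr hg1 ha, mul_zero, lmul_zero, (isLm_gm g2 hg2).map_zero']

lemma fb_alpha (h : IsMAlg e α β) (hr : 1 ≤ r) {L : A → A} (hL : L ∈ FbM e α r)
    {a : A} (ha : a ∈ eigSet e α) : L a = 0 := by
  obtain ⟨g2, hg2, t, ht, g1, hg1, hx⟩ := fb_elim hL
  obtain ⟨ts, hlen, hmem, hg1x⟩ := gm_elim hg1
  have hb : Lmul ts a ∈ eigSet e α := lmul0_mem h.f0a hmem ha
  obtain ⟨z1, hz1, z0, hz0, hzz⟩ := h.faa t ht _ hb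
  have hLg2 := isLm_gm g2 hg2
  rw [hx, hg1x, lmul_rep ha, lmul_smul, mul_smul_comm, lmul_smul, hLg2.map_smul', hzz,
    lmul_add, lmul_rep hz1, lmul_rep hz0, one_pow, one_smul, hLg2.map_add', hLg2.map_smul',
    gm_one h hr hg2 hz1, gm_zero hr hg2 hz0, smul_zero, add_zero, smul_zero]

lemma fa_one (h : IsMAlg e α β) (hr : 1 ≤ r) {L : A → A} (hL : L ∈ FaM e α β r)
    {a : A} (ha : a ∈ eigSet e (1 : F)) : L a = 0 := by
  obtain ⟨P, hP, t, ht, g1, hg1, hx⟩ := fa_elim hL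
  rw [hx, gm_one h hr hg1 ha, mul_zero, lmul_zero, (isLm_fb P hP).map_zero']

lemma fa_zero (h : IsMAlg e α β) (hr : 1 ≤ r) {L : A → A} (hL : L ∈ FaM e α β r)
    {a : A} (ha : a ∈ eigSet e (0 : F)) : L a = 0 := by
  obtain ⟨P, hP, t, ht, g1, hg1, hx⟩ := fa_elim hL
  rw [hx, gm_zero hr hg1 ha, mul_zero, lmul_zero, (isLm_fb P hP).map_zero']

lemma fa_beta (h : IsMAlg e α β) (hr : 1 ≤ r) {L : A → A} (hL : L ∈ FaM e α β r)
    {a : A} (ha : a ∈ eigSet e β) : L a = 0 := by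
  obtain ⟨P, hP, t, ht, g1, hg1, hx⟩ := fa_elim hL
  obtain ⟨ts, hlen, hmem, hg1x⟩ := gm_elim hg1
  have hb : Lmul ts a ∈ eigSet e β := lmul0_mem h.f0b hmem ha
  obtain ⟨z1, hz1, z0, hz0, za, hza, hzz⟩ := h.fbb t ht _ hb
  have hLP := isLm_fb P hP
  rw [hx, hg1x, lmul_rep ha, lmul_smul, mul_smul_comm, lmul_smul, hLP.map_smul', hzz,
    lmul_add, lmul_add, lmul_rep hz1, lmul_rep hz0, lmul_rep hza, one_pow, one_smul,
    hLP.map_add', hLP.map_add', hLP.map_smul', hLP.map_smul',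
    fb_one h hr hP hz1, fb_zero h hr hP hz0, fb_alpha h hr hP hza,
    smul_zero, smul_zero, add_zero, add_zero, smul_zero]

lemma f1_zero (h : IsMAlg e α β) (hr : 1 ≤ r) {L : A → A} (hL : L ∈ F1M e α β r)
    {a : A} (ha : a ∈ eigSet e (0 : F)) : L a = 0 := by
  obtain ⟨P, hP, t, ht, hx⟩ := f1_elim hL
  rw [hx, lmul_rep ha, zero_pow (by omega : r ≠ 0), zero_smul, mul_zero, lmul_zero,
    (isLm_fa P hP).map_zero']

lemma f1_alpha (h : IsMAlg e α β) (hr : 1 ≤ r) {L : A → A} (hL : L ∈ F1M e α β r)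
    {a : A} (ha : a ∈ eigSet e α) : L a = 0 := by
  obtain ⟨P, hP, t, ht, hx⟩ := f1_elim hL
  obtain ⟨z1, hz1, z0, hz0, hzz⟩ := h.faa t ht a ha
  have hLP := isLm_fa P hP
  rw [hx, lmul_rep ha, mul_smul_comm, lmul_smul, hLP.map_smul', hzz,
    lmul_add, lmul_rep hz1, lmul_rep hz0, one_pow, one_smul, hLP.map_add', hLP.map_smul',
    fa_one h hr hP hz1, fa_zero h hr hP hz0, smul_zero, add_zero, smul_zero]

lemma f1_beta (h : IsMAlg e α β) (hr : 1 ≤ r) {L : A → A} (hL : L ∈ F1M e α β r)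
    {a : A} (ha : a ∈ eigSet e β) : L a = 0 := by
  obtain ⟨P, hP, t, ht, hx⟩ := f1_elim hL
  have hc : t * a ∈ eigSet e β := h.fab t ht a ha
  have hLP := isLm_fa P hP
  rw [hx, lmul_rep ha, mul_smul_comm, lmul_smul, hLP.map_smul', lmul_rep hc,
    hLP.map_smul', fa_beta h hr hP hc, smul_zero, smul_zero]

lemma f0_one (h : IsMAlg e α β) (hr : 1 ≤ r) {L : A → A} (hL : L ∈ F0M e α β r)
    {a : A} (ha : a ∈ eigSet e (1 : F)) : L a = 0 := by
  obtain ⟨P, hP, t, ht, ts, hlen, hmem, hx⟩ := f0_elim hL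
  rw [hx, lmul0_one h hmem (by rintro rfl; simp at hlen; omega) ha, mul_zero, lmul_zero,
    (isLm_fa P hP).map_zero']

lemma f0_alpha (h : IsMAlg e α β) (hr : 1 ≤ r) {L : A → A} (hL : L ∈ F0M e α β r)
    {a : A} (ha : a ∈ eigSet e α) : L a = 0 := by
  obtain ⟨P, hP, t, ht, ts, hlen, hmem, hx⟩ := f0_elim hL
  have hb : Lmul ts a ∈ eigSet e α := lmul0_mem h.f0a hmem ha
  obtain ⟨z1, hz1, z0, hz0, hzz⟩ := h.faa t ht _ hb
  have hLP := isLm_fa P hP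
  rw [hx, hzz, lmul_add, lmul_rep hz1, lmul_rep hz0, one_pow, one_smul,
    hLP.map_add', hLP.map_smul', fa_one h hr hP hz1, fa_zero h hr hP hz0,
    smul_zero, add_zero]

lemma f0_beta (h : IsMAlg e α β) (hr : 1 ≤ r) {L : A → A} (hL : L ∈ F0M e α β r)
    {a : A} (ha : a ∈ eigSet e β) : L a = 0 := by
  obtain ⟨P, hP, t, ht, ts, hlen, hmem, hx⟩ := f0_elim hL
  have hb : Lmul ts a ∈ eigSet e β := lmul0_mem h.f0b hmem ha
  have hc : t * Lmul ts a ∈ eigSet e β := h.fab t ht _ hb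
  have hLP := isLm_fa P hP
  rw [hx, lmul_rep hc, hLP.map_smul', fa_beta h hr hP hc, smul_zero]

end Kill

section Sep

variable {e : A} {α β : F} {r : ℕ}

lemma sep_b (h : IsMAlg e α β) (hm : MartindaleM e α β) (hr : 1 ≤ r)
    {a : A} (ha : a ∈ eigSet e β) (hz : ∀ L ∈ FbM e α r, L a = 0) : a = 0 := by
  obtain ⟨m1, m2, m3, m4, m5, m6, m7⟩ := hm
  -- Step A: for all tα ∈ Aα and all r-fold A₀-lists ts, tα * Lmul ts a = 0
  have claim1 : ∀ tα ∈ eigSet e α, ∀ ts : List A, ts.length = r →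
      (∀ t ∈ ts, t ∈ eigSet e (0 : F)) → tα * Lmul ts a = 0 := by
    intro tα htα ts hlen hmem
    have hb : Lmul ts a ∈ eigSet e β := lmul0_mem h.f0b hmem ha
    have hc : tα * Lmul ts a ∈ eigSet e β := h.fab tα htα _ hb
    refine nested h.f0b m5 r _ hc ?_
    intro ts' hlen' hmem'
    have hmemL := fb_intro (α := α) (gm_intro hlen' hmem') (gm_intro hlen hmem) htα
    have h0 := hz _ hmemL
    simp only [lmul_rep ha, lmul_smul, mul_smul_comm, lmul_rep hc] at h0
    exact smul_cancel (pow_ne_zero _ h.hβ0) (smul_cancel (pow_ne_zero _ h.hβ0)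
      (smul_cancel (pow_ne_zero _ h.hβ0) h0))
  -- Step B: Lmul ts a = 0 for all such ts
  have claim2 : ∀ ts : List A, ts.length = r → (∀ t ∈ ts, t ∈ eigSet e (0 : F)) →
      Lmul ts a = 0 := by
    intro ts hlen hmem
    exact m6 _ (lmul0_mem h.f0b hmem ha) (fun t ht => claim1 t ht ts hlen hmem)
  exact nested h.f0b m5 r a ha claim2

lemma sep_a (h : IsMAlg e α β) (hm : MartindaleM e α β) (hr : 1 ≤ r)
    {a : A} (ha : a ∈ eigSet e α) (hz : ∀ L ∈ FaM e α β r, L a = 0) : a = 0 := by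
  obtain ⟨m1, m2, m3, m4, m5, m6, m7⟩ := hm
  have claim1 : ∀ tβ ∈ eigSet e β, ∀ ts : List A, ts.length = r →
      (∀ t ∈ ts, t ∈ eigSet e (0 : F)) → tβ * Lmul ts a = 0 := by
    intro tβ htβ ts hlen hmem
    have hb : Lmul ts a ∈ eigSet e α := lmul0_mem h.f0a hmem ha
    have hc : tβ * Lmul ts a ∈ eigSet e β := by
      rw [mul_comm]; exact h.fab _ hb tβ htβ
    refine sep_b h ⟨m1, m2, m3, m4, m5, m6, m7⟩ hr hc ?_
    intro P hP
    have hmemL := fa_intro hP (gm_intro hlen hmem) htβ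
    have h0 := hz _ hmemL
    have hLP := isLm_fb P hP
    simp only [lmul_rep ha, lmul_smul, mul_smul_comm, lmul_rep hc, hLP.map_smul'] at h0
    exact smul_cancel (pow_ne_zero _ h.hβ0) (smul_cancel (pow_ne_zero _ h.hα0) h0)
  have claim2 : ∀ ts : List A, ts.length = r → (∀ t ∈ ts, t ∈ eigSet e (0 : F)) →
      Lmul ts a = 0 := by
    intro ts hlen hmem
    exact m7 _ (lmul0_mem h.f0a hmem ha) (fun t ht => claim1 t ht ts hlen hmem)
  exact nested h.f0a m4 r a ha claim2

lemma sep_1 (h : IsMAlg e α β) (hm : MartindaleM e α β) (hr : 1 ≤ r)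
    {a : A} (ha : a ∈ eigSet e (1 : F)) (hz : ∀ L ∈ F1M e α β r, L a = 0) : a = 0 := by
  refine hm.1 a ha fun tα htα => ?_
  have hc : tα * a ∈ eigSet e α := by
    rw [mul_comm]; exact h.f1a a ha tα htα
  refine sep_a h hm hr hc ?_
  intro P hP
  have hmemL := f1_intro hP htα
  have h0 := hz _ hmemL
  have hLP := isLm_fa P hP
  simp only [lmul_rep ha, one_pow, one_smul, lmul_rep hc, hLP.map_smul'] at h0
  exact smul_cancel (pow_ne_zero _ h.hα0) h0

lemma sep_0 (h : IsMAlg e α β) (hm : MartindaleM e α β) (hr : 1 ≤ r)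
    {a : A} (ha : a ∈ eigSet e (0 : F)) (hz : ∀ L ∈ F0M e α β r, L a = 0) : a = 0 := by
  have claim1 : ∀ tα ∈ eigSet e α, ∀ ts : List A, ts.length = r →
      (∀ t ∈ ts, t ∈ eigSet e (0 : F)) → tα * Lmul ts a = 0 := by
    intro tα htα ts hlen hmem
    have hb : Lmul ts a ∈ eigSet e (0 : F) := lmul0_mem h.f00 hmem ha
    have hc : tα * Lmul ts a ∈ eigSet e α := by
      rw [mul_comm]; exact h.f0a _ hb tα htα
    refine sep_a h hm hr hc ?_
    intro P hP
    have hmemL := f0_intro hP htα hlen hmem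
    have h0 := hz _ hmemL
    have hLP := isLm_fa P hP
    simp only [lmul_rep hc, hLP.map_smul'] at h0
    exact smul_cancel (pow_ne_zero _ h.hα0) h0
  have claim2 : ∀ ts : List A, ts.length = r → (∀ t ∈ ts, t ∈ eigSet e (0 : F)) →
      Lmul ts a = 0 := by
    intro ts hlen hmem
    exact hm.2.1 _ (lmul0_mem h.f00 hmem ha) (fun t ht => claim1 t ht ts hlen hmem)
  exact nested h.f00 hm.2.2.1 r a ha claim2

end Sep

end MAlgAux
/-- Lemma 5.1: for `i ≠ j` in `{1, 0, α, β}`, `𝓕_i A_j = 0`, and `𝓕_i`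
separates points of `A_i`. -/
theorem malg_operator_families {F A : Type*} [Field F] [NonUnitalNonAssocCommRing A]
    [Module F A] [SMulCommClass F A A] [IsScalarTower F A A]
    (e : A) (α β : F) (h : IsMAlg e α β) (hm : MartindaleM e α β) (r : ℕ) (hr : 1 ≤ r) :
    (∀ L ∈ F1M e α β r, ∀ a ∈ eigSet e (0 : F), L a = 0) ∧
    (∀ L ∈ F1M e α β r, ∀ a ∈ eigSet e α, L a = 0) ∧
    (∀ L ∈ F1M e α β r, ∀ a ∈ eigSet e β, L a = 0) ∧
    (∀ L ∈ F0M e α β r, ∀ a ∈ eigSet e (1 : F), L a = 0) ∧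
    (∀ L ∈ F0M e α β r, ∀ a ∈ eigSet e α, L a = 0) ∧
    (∀ L ∈ F0M e α β r, ∀ a ∈ eigSet e β, L a = 0) ∧
    (∀ L ∈ FaM e α β r, ∀ a ∈ eigSet e (1 : F), L a = 0) ∧
    (∀ L ∈ FaM e α β r, ∀ a ∈ eigSet e (0 : F), L a = 0) ∧
    (∀ L ∈ FaM e α β r, ∀ a ∈ eigSet e β, L a = 0) ∧
    (∀ L ∈ FbM e α r, ∀ a ∈ eigSet e (1 : F), L a = 0) ∧
    (∀ L ∈ FbM e α r, ∀ a ∈ eigSet e (0 : F), L a = 0) ∧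
    (∀ L ∈ FbM e α r, ∀ a ∈ eigSet e α, L a = 0) ∧
    (∀ a ∈ eigSet e (1 : F), (∀ L ∈ F1M e α β r, L a = 0) → a = 0) ∧
    (∀ a ∈ eigSet e (0 : F), (∀ L ∈ F0M e α β r, L a = 0) → a = 0) ∧
    (∀ a ∈ eigSet e α, (∀ L ∈ FaM e α β r, L a = 0) → a = 0) ∧
    (∀ a ∈ eigSet e β, (∀ L ∈ FbM e α r, L a = 0) → a = 0) := by
  exact ⟨fun L hL a ha => f1_zero h hr hL ha,
    fun L hL a ha => f1_alpha h hr hL ha,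
    fun L hL a ha => f1_beta h hr hL ha,
    fun L hL a ha => f0_one h hr hL ha,
    fun L hL a ha => f0_alpha h hr hL ha,
    fun L hL a ha => f0_beta h hr hL ha,
    fun L hL a ha => fa_one h hr hL ha,
    fun L hL a ha => fa_zero h hr hL ha,
    fun L hL a ha => fa_beta h hr hL ha,
    fun L hL a ha => fb_one h hr hL ha,
    fun L hL a ha => fb_zero h hr hL ha,
    fun L hL a ha => fb_alpha h hr hL ha,
    fun a ha hz => sep_1 h hm hr ha hz,
    fun a ha hz => sep_0 h hm hr ha hz,
    fun a ha hz => sep_a h hm hr ha hz,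
    fun a ha hz => sep_b h hm hr ha hz⟩
end

section
/- Let (A,e) be an M(α,β)-algebra (α, β, 1, 0 pairwise distinct) satisfying the Martindale-like conditions (i)–(v), and let f be a nullifying function on A. Then f(a₁, a₀, a_α, a_β) = 0 for all a_i ∈ A_i, i ∈ {1, 0, α, β}. -/
/-!
By axiom (V), a word of left multiplications whose length is a multiple of `r` can be moved
inside `f`. We use words `e^(3r-2) u t` and `u t e^(3r-2)` with `u ∈ A₀` and `t ∈ A_α` or
`t ∈ A_β` (length `3r`, with at least one `e`): powers of `e` act on `A_λ` as `λ^n`, and the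
fusion law tells in which eigenspaces the entries land, so that (III), (IV) and the cases
already established evaluate `f` on the image. Comparing eigencomponents shows that products
`u (t x)` vanish, and the Martindale conditions turn this into the vanishing of components of
`x`. One bootstraps: `f(a_α, c) ∈ A_α` for every `c`, hence `f(a_α, a_β) = 0`, hence
`f(a₀, a_α, a_β) = 0`. Finally every word in `A₀` of length `r` kills `f(a₁, a₀, a_α, a_β)`,
which puts it in `A₁`, and the words `u t e^(3r-2)` then kill it.
-/

section Words

variable {M : Type*} [Mul M]

@[simp]
theorem Lmul_nil (x : M) : Lmul [] x = x := rfl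

@[simp]
theorem Lmul_cons (t : M) (ts : List M) (x : M) : Lmul (t :: ts) x = t * Lmul ts x := rfl

@[simp]
theorem Lmul_append_apply (s t : List M) (x : M) : Lmul (s ++ t) x = Lmul s (Lmul t x) := by
  simp [Lmul, List.foldr_append]

theorem Lmul_append (s t : List M) : Lmul (s ++ t) = Lmul s ∘ Lmul t :=
  funext (Lmul_append_apply s t)

theorem Lmul_mem {S T : Set M} (hST : ∀ u ∈ T, ∀ z ∈ S, u * z ∈ S) {us : List M}
    (hus : ∀ u ∈ us, u ∈ T) {z : M} (hz : z ∈ S) : Lmul us z ∈ S := by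
  induction us with
  | nil => exact hz
  | cons u us ih =>
    simp only [List.forall_mem_cons] at hus
    exact hST u hus.1 _ (ih hus.2)

theorem eq_zero_of_forall_Lmul_eq_zero [Zero M] {S T : Set M}
    (hST : ∀ u ∈ T, ∀ z ∈ S, u * z ∈ S) (hann : ∀ z ∈ S, (∀ u ∈ T, u * z = 0) → z = 0)
    (k : ℕ) {y : M} (hy : y ∈ S)
    (hk : ∀ us : List M, us.length = k → (∀ u ∈ us, u ∈ T) → Lmul us y = 0) : y = 0 := by
  induction k generalizing y with
  | zero => simpa using hk [] rfl (by simp)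
  | succ k ih =>
    refine hann y hy fun u hu => ih (hST u hu y hy) fun us hlen hus => ?_
    simpa using
      hk (us ++ [u]) (by simp [hlen]) (by simpa [or_imp, forall_and] using ⟨hus, hu⟩)

theorem Lmul_zero {M₀ : Type*} [MulZeroClass M₀] (ts : List M₀) : Lmul ts 0 = 0 := by
  induction ts with
  | nil => rfl
  | cons t ts ih => simp [ih]

theorem Lmul_add {R : Type*} [NonUnitalNonAssocSemiring R] (ts : List R) (x y : R) :
    Lmul ts (x + y) = Lmul ts x + Lmul ts y := by
  induction ts with
  | nil => rfl
  | cons t ts ih => simp [ih, mul_add]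

end Words

section Eigenspaces

variable {F A : Type*} [Field F] [NonUnitalNonAssocCommRing A] [Module F A] {e : A}

theorem zero_mem_eigSet (lam : F) : (0 : A) ∈ eigSet e lam := by
  simp [eigSet]

theorem smul_mem_eigSet [SMulCommClass F A A] {lam : F} (c : F) {x : A} (hx : x ∈ eigSet e lam) :
    c • x ∈ eigSet e lam := by
  simp_all [eigSet, mul_smul_comm, smul_comm c lam]

theorem eq_zero_of_mem_eigSet_of_ne {lam mu : F} (hne : lam ≠ mu) {x : A}
    (hl : x ∈ eigSet e lam) (hm : x ∈ eigSet e mu) : x = 0 := by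
  have : (lam - mu) • x = 0 := by rw [sub_smul, ← hl, ← hm, sub_self]
  exact (smul_eq_zero.mp this).resolve_left (sub_ne_zero.mpr hne)

theorem Lmul_replicate_of_mem_eigSet [SMulCommClass F A A] {lam : F} {z : A}
    (hz : z ∈ eigSet e lam) (n : ℕ) : Lmul (List.replicate n e) z = lam ^ n • z := by
  induction n with
  | zero => simp
  | succ n ih =>
    rw [List.replicate_succ, Lmul_cons, ih, mul_smul_comm, hz, smul_smul, ← pow_succ]

theorem Lmul_replicate_mem_eigSet [SMulCommClass F A A] {lam : F} {z : A}
    (hz : z ∈ eigSet e lam) (n : ℕ) : Lmul (List.replicate n e) z ∈ eigSet e lam :=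
  (Lmul_replicate_of_mem_eigSet hz n).symm ▸ smul_mem_eigSet _ hz

theorem eigSet_eq_of_sum_eq [SMulCommClass F A A] {ι : Type*} [Fintype ι] {μ : ι → F}
    (hμ : Function.Injective μ) {v w : ι → A} (hv : ∀ i, v i ∈ eigSet e (μ i)) (hw : ∀ i, w i ∈ eigSet e (μ i))
    (hvw : ∑ i, v i = ∑ i, w i) : v = w := by
  have hind := (Module.End.eigenspaces_iSupIndep (LinearMap.mulLeft F e)).comp hμ
  funext i
  refine (iSupIndep_iff_finsetSum_eq_imp_eq _).1 hind Finset.univ v w (fun j _ => ?_) hvw i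
    (Finset.mem_univ i)
  exact ⟨Module.End.mem_eigenspace_iff.2 (hv j), Module.End.mem_eigenspace_iff.2 (hw j)⟩

end Eigenspaces

namespace IsNullifying

variable {A : Type*} [NonUnitalNonAssocCommRing A] {f : List A → A} {r : ℕ}

theorem pos (hf : IsNullifying f r) : 0 < r := hf.1

theorem perm (hf : IsNullifying f r) {l l' : List A} (hl : l.Perm l') : f l = f l' :=
  hf.2.1 l l' hl

theorem singleton (hf : IsNullifying f r) (x : A) : f [x] = 0 := hf.2.2.2.1 x

theorem append_zero (hf : IsNullifying f r) {l : List A} (hl : l ≠ []) : f (l ++ [0]) = f l :=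
  hf.2.2.2.2.1 l hl

theorem Lmul_apply (hf : IsNullifying f r) {ts : List A} (hts : ts.length = r) (l : List A) :
    Lmul ts (f l) = f (l.map (Lmul ts)) :=
  hf.2.2.2.2.2 ts hts l

theorem zero_cons (hf : IsNullifying f r) {l : List A} (hl : l ≠ []) : f (0 :: l) = f l := by
  rw [hf.perm (List.perm_append_singleton 0 l).symm, hf.append_zero hl]

theorem Lmul_apply_of_dvd (hf : IsNullifying f r) {ts : List A} (hts : r ∣ ts.length)
    (l : List A) : Lmul ts (f l) = f (l.map (Lmul ts)) := by
  obtain ⟨k, hk⟩ := hts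
  induction k generalizing ts with
  | zero =>
    rw [List.length_eq_zero_iff.1 (by simpa using hk : ts.length = 0)]
    exact congrArg f (List.map_id l).symm
  | succ k ih =>
    have htake : (ts.take r).length = r := by simp [hk, Nat.mul_succ]
    have hdrop : (ts.drop r).length = r * k := by simp [hk, Nat.mul_succ]
    calc Lmul ts (f l) = Lmul (ts.take r ++ ts.drop r) (f l) := by rw [List.take_append_drop]
      _ = Lmul (ts.take r) (Lmul (ts.drop r) (f l)) := Lmul_append_apply _ _ _
      _ = f (l.map (Lmul ts)) := by
          rw [ih hdrop, hf.Lmul_apply htake, List.map_map, ← Lmul_append,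
            List.take_append_drop]

end IsNullifying

section MAlgebra

variable {F A : Type*} [Field F] [NonUnitalNonAssocCommRing A] [Module F A] {e : A} {α β : F}

local notation "A₁" => eigSet e (1 : F)
local notation "A₀" => eigSet e (0 : F)
local notation "A_α" => eigSet e α
local notation "A_β" => eigSet e β

theorem IsMAlg.f01 (h : IsMAlg e α β) : ∀ x ∈ A₀, ∀ y ∈ A₁, x * y = 0 :=
  fun x hx y hy => mul_comm y x ▸ h.f10 y hy x hx

theorem IsMAlg.fa1 (h : IsMAlg e α β) : ∀ x ∈ A_α, ∀ y ∈ A₁, x * y ∈ A_α :=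
  fun x hx y hy => mul_comm y x ▸ h.f1a y hy x hx

theorem IsMAlg.fa0 (h : IsMAlg e α β) : ∀ x ∈ A_α, ∀ y ∈ A₀, x * y ∈ A_α :=
  fun x hx y hy => mul_comm y x ▸ h.f0a y hy x hx

theorem IsMAlg.fba (h : IsMAlg e α β) : ∀ x ∈ A_β, ∀ y ∈ A_α, x * y ∈ A_β :=
  fun x hx y hy => mul_comm y x ▸ h.fab y hy x hx

theorem IsMAlg.mul_mul_mem_zero (h : IsMAlg e α β) {u t p : A} (hu : u ∈ A₀) (ht : t ∈ A_α)
    (hp : p ∈ A_α) : u * (t * p) ∈ A₀ := by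
  obtain ⟨z1, hz1, z0, hz0, hz⟩ := h.faa t ht p hp
  rw [hz, mul_add, h.f01 u hu z1 hz1, zero_add]
  exact h.f00 u hu z0 hz0

theorem IsMAlg.Lmul_eq_zero_of_mem_one (h : IsMAlg e α β) {us : List A} (hne : us ≠ [])
    (hus : ∀ u ∈ us, u ∈ A₀) {a : A} (ha : a ∈ A₁) : Lmul us a = 0 := by
  obtain ⟨vs, u, rfl⟩ := List.eq_nil_or_concat' us |>.resolve_left hne
  rw [Lmul_append_apply, Lmul_cons, Lmul_nil, h.f01 u (hus u (by simp)) a ha, Lmul_zero]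

theorem MartindaleM.one_α (hm : MartindaleM e α β) :
    ∀ a ∈ A₁, (∀ t ∈ A_α, t * a = 0) → a = 0 := hm.1

theorem MartindaleM.zero_α (hm : MartindaleM e α β) :
    ∀ a ∈ A₀, (∀ t ∈ A_α, t * a = 0) → a = 0 := hm.2.1

theorem MartindaleM.zero_zero (hm : MartindaleM e α β) :
    ∀ a ∈ A₀, (∀ t ∈ A₀, t * a = 0) → a = 0 := hm.2.2.1

theorem MartindaleM.α_zero (hm : MartindaleM e α β) :
    ∀ a ∈ A_α, (∀ t ∈ A₀, t * a = 0) → a = 0 := hm.2.2.2.1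

theorem MartindaleM.β_zero (hm : MartindaleM e α β) :
    ∀ a ∈ A_β, (∀ t ∈ A₀, t * a = 0) → a = 0 := hm.2.2.2.2.1

theorem MartindaleM.β_α (hm : MartindaleM e α β) :
    ∀ a ∈ A_β, (∀ t ∈ A_α, t * a = 0) → a = 0 := hm.2.2.2.2.2.1

theorem MartindaleM.α_β (hm : MartindaleM e α β) :
    ∀ a ∈ A_α, (∀ t ∈ A_β, t * a = 0) → a = 0 := hm.2.2.2.2.2.2

variable [SMulCommClass F A A] {f : List A → A} {r : ℕ}

theorem IsMAlg.decomp_unique (h : IsMAlg e α β) {x1 x0 xa xb y1 y0 ya yb : A}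
    (hx1 : x1 ∈ A₁) (hx0 : x0 ∈ A₀) (hxa : xa ∈ A_α) (hxb : xb ∈ A_β)
    (hy1 : y1 ∈ A₁) (hy0 : y0 ∈ A₀) (hya : ya ∈ A_α) (hyb : yb ∈ A_β)
    (hxy : x1 + x0 + xa + xb = y1 + y0 + ya + yb) :
    x1 = y1 ∧ x0 = y0 ∧ xa = ya ∧ xb = yb := by
  have hμ : Function.Injective ![(1 : F), 0, α, β] := by
    intro i j hij
    fin_cases i <;> fin_cases j <;>
      simp_all [h.hα0, h.hα1, h.hβ0, h.hβ1, h.hαβ, eq_comm]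
  have hxy' := eigSet_eq_of_sum_eq hμ (v := ![x1, x0, xa, xb]) (w := ![y1, y0, ya, yb])
    (by intro i; fin_cases i <;> assumption) (by intro i; fin_cases i <;> assumption)
    (by simpa [Fin.sum_univ_four] using hxy)
  exact ⟨congrFun hxy' 0, congrFun hxy' 1, congrFun hxy' 2, congrFun hxy' 3⟩

theorem IsMAlg.mem_eigSet_zero_of_Lmul_replicate_eq_zero
    (h : IsMAlg e α β) {n : ℕ} (hn : n ≠ 0) {x : A} (hx : Lmul (List.replicate n e) x = 0) :
    x ∈ A₀ := by
  obtain ⟨x1, m1, x0, m0, xa, ma, xb, mb, rfl⟩ := h.decomp x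
  simp only [Lmul_add, Lmul_replicate_of_mem_eigSet m1, Lmul_replicate_of_mem_eigSet m0,
    Lmul_replicate_of_mem_eigSet ma, Lmul_replicate_of_mem_eigSet mb, one_pow, one_smul,
    zero_pow hn, zero_smul, add_zero] at hx
  obtain ⟨rfl, -, hxa, hxb⟩ := h.decomp_unique m1 (zero_mem_eigSet 0)
    (smul_mem_eigSet _ ma) (smul_mem_eigSet _ mb) (zero_mem_eigSet 1) (zero_mem_eigSet 0)
    (zero_mem_eigSet α) (zero_mem_eigSet β) (by rw [add_zero, hx]; abel)
  rw [smul_eq_zero, or_iff_right (pow_ne_zero n h.hα0)] at hxa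
  rw [smul_eq_zero, or_iff_right (pow_ne_zero n h.hβ0)] at hxb
  simpa [hxa, hxb] using m0

theorem IsMAlg.components_eq_zero_of_forall_Lmul_eq_zero
    (h : IsMAlg e α β) (hm : MartindaleM e α β) (k : ℕ) {x0 xa xb : A} (h0 : x0 ∈ A₀)
    (ha : xa ∈ A_α) (hb : xb ∈ A_β)
    (hk : ∀ us : List A, us.length = k → (∀ u ∈ us, u ∈ A₀) → Lmul us (x0 + xa + xb) = 0) :
    x0 = 0 ∧ xa = 0 ∧ xb = 0 := by
  have hcomp : ∀ us : List A, us.length = k → (∀ u ∈ us, u ∈ A₀) →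
      Lmul us x0 = 0 ∧ Lmul us xa = 0 ∧ Lmul us xb = 0 := by
    intro us hlen hus
    obtain ⟨-, h0', ha', hb'⟩ := h.decomp_unique (zero_mem_eigSet 1) (Lmul_mem h.f00 hus h0)
      (Lmul_mem h.f0a hus ha) (Lmul_mem h.f0b hus hb) (zero_mem_eigSet 1) (zero_mem_eigSet 0)
      (zero_mem_eigSet α) (zero_mem_eigSet β) (by simpa [Lmul_add] using hk us hlen hus)
    exact ⟨h0', ha', hb'⟩
  exact ⟨eq_zero_of_forall_Lmul_eq_zero h.f00 hm.zero_zero k h0 fun us hl hus =>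
      (hcomp us hl hus).1,
    eq_zero_of_forall_Lmul_eq_zero h.f0a hm.α_zero k ha fun us hl hus => (hcomp us hl hus).2.1,
    eq_zero_of_forall_Lmul_eq_zero h.f0b hm.β_zero k hb fun us hl hus => (hcomp us hl hus).2.2⟩

theorem IsNullifying.cons_mem_eigSet_zero (hf : IsNullifying f r) (h : IsMAlg e α β)
    {b : A} (hb : b ∈ A₀) {l : List A} (hl : l ≠ [])
    (hfl : f (l.map (Lmul (List.replicate r e))) = 0) : f (b :: l) ∈ A₀ := by
  refine h.mem_eigSet_zero_of_Lmul_replicate_eq_zero hf.pos.ne' ?_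
  rw [hf.Lmul_apply_of_dvd (by simp), List.map_cons, Lmul_replicate_of_mem_eigSet hb,
    zero_pow hf.pos.ne', zero_smul, hf.zero_cons (by simpa using hl), hfl]

theorem IsNullifying.pair_mem_eigSet_zero (hf : IsNullifying f r) (h : IsMAlg e α β)
    {b : A} (hb : b ∈ A₀) (c : A) : f [b, c] ∈ A₀ :=
  hf.cons_mem_eigSet_zero h hb (List.cons_ne_nil c []) (hf.singleton _)

theorem IsNullifying.pair_components_eq_zero (hf : IsNullifying f r) (h : IsMAlg e α β)
    (hm : MartindaleM e α β) {p c : A} (hp : p ∈ A_α) {x1 x0 xa xb : A} (m1 : x1 ∈ A₁)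
    (m0 : x0 ∈ A₀) (ma : xa ∈ A_α) (mb : xb ∈ A_β) (hx : f [p, c] = x1 + x0 + xa + xb) :
    x1 = 0 ∧ xb = 0 := by
  have hr := hf.pos
  have hword : ∀ t ∈ A_α, ∀ u ∈ A₀, u * (t * x1) = 0 ∧ u * (t * xb) = 0 := by
    intro t ht u hu
    set L := Lmul ([u, t] ++ List.replicate (3 * r - 2) e) with hL
    have hmem : L (f [p, c]) ∈ A₀ := by
      rw [hL, hf.Lmul_apply_of_dvd ⟨3, by simp; omega⟩]
      simp only [List.map_cons, List.map_nil, Lmul_append_apply, Lmul_cons, Lmul_nil,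
        Lmul_replicate_of_mem_eigSet hp, mul_smul_comm]
      exact hf.pair_mem_eigSet_zero h (smul_mem_eigSet _ (h.mul_mul_mem_zero hu ht hp)) _
    obtain ⟨w1, hw1, w0, hw0, hw⟩ := h.faa t ht xa ma
    have hexp : L (f [p, c]) = α ^ (3 * r - 2) • (u * w0) + u * (t * x1) +
        β ^ (3 * r - 2) • (u * (t * xb)) := by
      simp only [hL, hx, Lmul_append_apply, Lmul_cons, Lmul_nil, Lmul_add,
        Lmul_replicate_of_mem_eigSet m1, Lmul_replicate_of_mem_eigSet m0,
        Lmul_replicate_of_mem_eigSet ma, Lmul_replicate_of_mem_eigSet mb, one_pow, one_smul,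
        zero_pow (by omega : 3 * r - 2 ≠ 0), zero_smul, mul_zero, mul_add, mul_smul_comm, hw,
        h.f01 u hu w1 hw1, zero_add]
      abel
    obtain ⟨-, -, h1, hb⟩ := h.decomp_unique (zero_mem_eigSet 1) hmem (zero_mem_eigSet α)
      (zero_mem_eigSet β) (zero_mem_eigSet 1) (smul_mem_eigSet _ (h.f00 u hu w0 hw0))
      (h.f0a u hu _ (h.fa1 t ht x1 m1)) (smul_mem_eigSet _ (h.f0b u hu _ (h.fab t ht xb mb)))
      (by rw [hexp]; abel)
    exact ⟨h1.symm, (smul_eq_zero.1 hb.symm).resolve_left (pow_ne_zero _ h.hβ0)⟩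
  exact ⟨hm.one_α x1 m1 fun t ht => hm.α_zero _ (h.fa1 t ht x1 m1) fun u hu =>
      (hword t ht u hu).1,
    hm.β_α xb mb fun t ht => hm.β_zero _ (h.fab t ht xb mb) fun u hu => (hword t ht u hu).2⟩

theorem IsNullifying.pair_mem_eigSet_α (hf : IsNullifying f r) (h : IsMAlg e α β)
    (hm : MartindaleM e α β) {p : A} (hp : p ∈ A_α) (c : A) : f [p, c] ∈ A_α := by
  have hr := hf.pos
  obtain ⟨x1, m1, x0, m0, xa, ma, xb, mb, hx⟩ := h.decomp (f [p, c])
  obtain ⟨rfl, rfl⟩ := hf.pair_components_eq_zero h hm hp m1 m0 ma mb hx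
  suffices x0 = 0 by simpa [hx, this] using ma
  refine hm.zero_α x0 m0 fun t ht => hm.α_zero _ (h.fa0 t ht x0 m0) fun u hu => ?_
  obtain ⟨w1, hw1, w0, hw0, hw⟩ := h.faa t ht xa ma
  set L := Lmul (List.replicate (3 * r - 2) e ++ [u, t]) with hL
  have hword : L (f [p, c]) = 0 := by
    rw [hL, hf.Lmul_apply_of_dvd ⟨3, by simp; omega⟩]
    simp only [List.map_cons, List.map_nil, Lmul_append_apply, Lmul_cons, Lmul_nil,
      Lmul_replicate_of_mem_eigSet (h.mul_mul_mem_zero hu ht hp),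
      zero_pow (by omega : 3 * r - 2 ≠ 0), zero_smul]
    rw [hf.zero_cons (List.cons_ne_nil _ _), hf.singleton]
  have hexp : L (f [p, c]) = α ^ (3 * r - 2) • (u * (t * x0)) := by
    rw [hL, hx, Lmul_append_apply, Lmul_cons, Lmul_cons, Lmul_nil, zero_add, add_zero, mul_add,
      hw, mul_add, mul_add, h.f01 u hu w1 hw1, zero_add, Lmul_add,
      Lmul_replicate_of_mem_eigSet (h.f0a u hu _ (h.fa0 t ht x0 m0)),
      Lmul_replicate_of_mem_eigSet (h.f00 u hu w0 hw0), zero_pow (by omega), zero_smul,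
      add_zero]
  rw [hexp, smul_eq_zero] at hword
  exact hword.resolve_left (pow_ne_zero _ h.hα0)

theorem IsNullifying.pair_eq_zero (hf : IsNullifying f r) (h : IsMAlg e α β)
    (hm : MartindaleM e α β) {p q : A} (hp : p ∈ A_α) (hq : q ∈ A_β) : f [p, q] = 0 := by
  have hr := hf.pos
  have hx := hf.pair_mem_eigSet_α h hm hp q
  refine hm.α_β _ hx fun t ht => hm.β_zero _ (h.fba t ht _ hx) fun u hu => ?_
  have hutx := h.f0b u hu _ (h.fba t ht _ hx)
  set L := Lmul (List.replicate (3 * r - 2) e ++ [u, t]) with hL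
  have hLx : L (f [p, q]) = β ^ (3 * r - 2) • (u * (t * f [p, q])) := by
    rw [hL, Lmul_append_apply, Lmul_cons, Lmul_cons, Lmul_nil,
      Lmul_replicate_of_mem_eigSet hutx]
  have hLq : L q ∈ A_α := by
    obtain ⟨z1, hz1, z0, hz0, za, hza, hz⟩ := h.fbb t ht q hq
    rw [hL, Lmul_append_apply, Lmul_cons, Lmul_cons, Lmul_nil, hz, mul_add, mul_add,
      h.f01 u hu z1 hz1, zero_add, Lmul_add, Lmul_replicate_of_mem_eigSet (h.f00 u hu z0 hz0),
      zero_pow (by omega), zero_smul, zero_add]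
    exact Lmul_replicate_mem_eigSet (h.f0a u hu za hza) _
  have hmem : L (f [p, q]) ∈ A_α := by
    rw [hL, hf.Lmul_apply_of_dvd ⟨3, by simp; omega⟩, ← hL, List.map_cons, List.map_cons,
      List.map_nil, hf.perm (List.Perm.swap _ _ [])]
    exact hf.pair_mem_eigSet_α h hm hLq _
  have hzero := eq_zero_of_mem_eigSet_of_ne h.hαβ hmem (hLx ▸ smul_mem_eigSet _ hutx)
  rw [hLx, smul_eq_zero] at hzero
  exact hzero.resolve_left (pow_ne_zero _ h.hβ0)


theorem IsNullifying.triple_mem_eigSet_zero (hf : IsNullifying f r) (h : IsMAlg e α β)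
    (hm : MartindaleM e α β) {b0 bα bβ : A} (h0 : b0 ∈ A₀) (ha : bα ∈ A_α) (hb : bβ ∈ A_β) :
    f [b0, bα, bβ] ∈ A₀ :=
  hf.cons_mem_eigSet_zero h h0 (List.cons_ne_nil _ _)
    (hf.pair_eq_zero h hm (Lmul_replicate_mem_eigSet ha r) (Lmul_replicate_mem_eigSet hb r))

theorem IsNullifying.triple_eq_zero (hf : IsNullifying f r) (h : IsMAlg e α β)
    (hm : MartindaleM e α β) {b0 bα bβ : A} (h0 : b0 ∈ A₀) (ha : bα ∈ A_α) (hb : bβ ∈ A_β) :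
    f [b0, bα, bβ] = 0 := by
  have hr := hf.pos
  have hy := hf.triple_mem_eigSet_zero h hm h0 ha hb
  refine hm.zero_α _ hy fun t ht => hm.α_zero _ (h.fa0 t ht _ hy) fun u hu => ?_
  set L := Lmul (List.replicate (3 * r - 2) e ++ [u, t]) with hL
  have hLy : L (f [b0, bα, bβ]) = α ^ (3 * r - 2) • (u * (t * f [b0, bα, bβ])) := by
    rw [hL, Lmul_append_apply, Lmul_cons, Lmul_cons, Lmul_nil,
      Lmul_replicate_of_mem_eigSet (h.f0a u hu _ (h.fa0 t ht _ hy))]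
  have hL0 : L b0 ∈ A_α := by
    rw [hL, Lmul_append_apply]
    exact Lmul_replicate_mem_eigSet (h.f0a u hu _ (h.fa0 t ht b0 h0)) _
  have hLα : L bα = 0 := by
    rw [hL, Lmul_append_apply, Lmul_cons, Lmul_cons, Lmul_nil,
      Lmul_replicate_of_mem_eigSet (h.mul_mul_mem_zero hu ht ha), zero_pow (by omega), zero_smul]
  have hLβ : L bβ ∈ A_β := by
    rw [hL, Lmul_append_apply]
    exact Lmul_replicate_mem_eigSet (h.f0b u hu _ (h.fab t ht bβ hb)) _
  have hword : L (f [b0, bα, bβ]) = 0 := by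
    rw [hL, hf.Lmul_apply_of_dvd ⟨3, by simp; omega⟩, ← hL, List.map_cons, List.map_cons,
      List.map_cons, List.map_nil, hLα, hf.perm (List.Perm.swap _ _ _),
      hf.zero_cons (List.cons_ne_nil _ _), hf.pair_eq_zero h hm hL0 hLβ]
  rw [hLy, smul_eq_zero] at hword
  exact hword.resolve_left (pow_ne_zero _ h.hα0)

theorem IsNullifying.quadruple_mem_eigSet_one (hf : IsNullifying f r) (h : IsMAlg e α β)
    (hm : MartindaleM e α β) {a1 a0 aα aβ : A} (h1 : a1 ∈ A₁) (h0 : a0 ∈ A₀) (ha : aα ∈ A_α)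
    (hb : aβ ∈ A_β) : f [a1, a0, aα, aβ] ∈ A₁ := by
  obtain ⟨x1, m1, x0, m0, xa, ma, xb, mb, hx⟩ := h.decomp (f [a1, a0, aα, aβ])
  suffices x0 = 0 ∧ xa = 0 ∧ xb = 0 by simpa [hx, this] using m1
  refine h.components_eq_zero_of_forall_Lmul_eq_zero hm r m0 ma mb fun us hlen hus => ?_
  have hne : us ≠ [] := List.ne_nil_of_length_pos (hlen ▸ hf.pos)
  calc Lmul us (x0 + xa + xb) = Lmul us x1 + Lmul us (x0 + xa + xb) := by
        rw [h.Lmul_eq_zero_of_mem_one hne hus m1, zero_add]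
    _ = Lmul us (f [a1, a0, aα, aβ]) := by rw [← Lmul_add, hx, ← add_assoc, ← add_assoc]
    _ = f [0, Lmul us a0, Lmul us aα, Lmul us aβ] := by
        rw [hf.Lmul_apply_of_dvd (hlen ▸ dvd_refl r), List.map_cons,
          h.Lmul_eq_zero_of_mem_one hne hus h1]
        rfl
    _ = 0 := by
        rw [hf.zero_cons (List.cons_ne_nil _ _)]
        exact hf.triple_eq_zero h hm (Lmul_mem h.f00 hus h0) (Lmul_mem h.f0a hus ha)
          (Lmul_mem h.f0b hus hb)

theorem IsNullifying.mul_mul_quadruple_eq_zero (hf : IsNullifying f r) (h : IsMAlg e α β)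
    (hm : MartindaleM e α β) {a1 a0 aα aβ : A} (h1 : a1 ∈ A₁) (h0 : a0 ∈ A₀) (ha : aα ∈ A_α)
    (hb : aβ ∈ A_β) {t u : A} (ht : t ∈ A_α) (hu : u ∈ A₀) :
    u * (t * f [a1, a0, aα, aβ]) = 0 := by
  have hr := hf.pos
  have hx := hf.quadruple_mem_eigSet_one h hm h1 h0 ha hb
  set L := Lmul ([u, t] ++ List.replicate (3 * r - 2) e) with hL
  have hLx : L (f [a1, a0, aα, aβ]) = u * (t * f [a1, a0, aα, aβ]) := by
    rw [hL, Lmul_append_apply, Lmul_replicate_of_mem_eigSet hx, one_pow, one_smul]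
    rfl
  have hL1 : L a1 ∈ A_α := by
    rw [hL, Lmul_append_apply, Lmul_replicate_of_mem_eigSet h1, one_pow, one_smul]
    exact h.f0a u hu _ (h.fa1 t ht a1 h1)
  have hL0 : L a0 = 0 := by
    rw [hL, Lmul_append_apply, Lmul_replicate_of_mem_eigSet h0, zero_pow (by omega), zero_smul,
      Lmul_zero]
  have hLα : L aα ∈ A₀ := by
    rw [hL, Lmul_append_apply, Lmul_replicate_of_mem_eigSet ha, Lmul_cons, Lmul_cons, Lmul_nil,
      mul_smul_comm, mul_smul_comm]
    exact smul_mem_eigSet _ (h.mul_mul_mem_zero hu ht ha)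
  have hLβ : L aβ ∈ A_β := by
    rw [hL, Lmul_append_apply, Lmul_replicate_of_mem_eigSet hb, Lmul_cons, Lmul_cons, Lmul_nil,
      mul_smul_comm, mul_smul_comm]
    exact smul_mem_eigSet _ (h.f0b u hu _ (h.fab t ht aβ hb))
  rw [← hLx, hL, hf.Lmul_apply_of_dvd ⟨3, by simp; omega⟩, ← hL, List.map_cons, List.map_cons,
    List.map_cons, List.map_cons, List.map_nil, hL0, hf.perm (List.Perm.swap _ _ _),
    hf.zero_cons (List.cons_ne_nil _ _), hf.perm (List.Perm.swap _ _ _)]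
  exact hf.triple_eq_zero h hm hLα hL1 hLβ

end MAlgebra

theorem malg_nullifying_quadruple_general {F A : Type*} [Field F] [NonUnitalNonAssocCommRing A]
    [Module F A] [SMulCommClass F A A]
    (e : A) (α β : F) (h : IsMAlg e α β) (hm : MartindaleM e α β)
    (f : List A → A) (r : ℕ) (hf : IsNullifying f r)
    (a1 : A) (h1 : a1 ∈ eigSet e (1 : F))
    (a0 : A) (h0 : a0 ∈ eigSet e (0 : F))
    (aα : A) (ha : aα ∈ eigSet e α)
    (aβ : A) (hb : aβ ∈ eigSet e β) :
    f [a1, a0, aα, aβ] = 0 := by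
  have hx := hf.quadruple_mem_eigSet_one h hm h1 h0 ha hb
  exact hm.one_α _ hx fun t ht => hm.α_zero _ (h.fa1 t ht _ hx) fun u hu =>
    hf.mul_mul_quadruple_eq_zero h hm h1 h0 ha hb ht hu

/-- Lemma 5.2: `f(a₁, a₀, a_α, a_β) = 0` on eigencomponents. -/
theorem malg_nullifying_quadruple {F A : Type*} [Field F] [NonUnitalNonAssocCommRing A]
    [Module F A] [SMulCommClass F A A] [IsScalarTower F A A]
    (e : A) (α β : F) (h : IsMAlg e α β) (hm : MartindaleM e α β)
    (f : List A → A) (r : ℕ) (hf : IsNullifying f r)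
    (a1 : A) (h1 : a1 ∈ eigSet e (1 : F))
    (a0 : A) (h0 : a0 ∈ eigSet e (0 : F))
    (aα : A) (ha : aα ∈ eigSet e α)
    (aβ : A) (hb : aβ ∈ eigSet e β) :
    f [a1, a0, aα, aβ] = 0 :=
  malg_nullifying_quadruple_general e α β h hm f r hf a1 h1 a0 h0 aα ha aβ hb
end
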